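/- arXiv:1909.05510 — 9 statements merged into one kernel-verified Lean document; each statement's English description precedes it below -/
import Mathlib

section
/- Let G be a finite simple connected graph and v a vertex of G that is not a cut vertex. Then χ_dd(G - v) ≤ χ_dd(G) + deg(v) - 1. -/
/-- A domination coloring of `G` with colors in `Fin n`: a proper coloring such that
every vertex dominates at least one (nonempty) color class, and every nonempty
color class is dominated by some vertex (contained in its closed neighborhood). -/
def IsDomColoring {V : Type*} (G : SimpleGraph V) {n : ℕ} (c : V → Fin n) : Prop :=
  (∀ u v : V, G.Adj u v → c u ≠ c v) ∧
  (∀ v : V, ∃ i : Fin n, (∃ u : V, c u = i) ∧ ∀ u : V, c u = i → u = v ∨ G.Adj v u) ∧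
  (∀ i : Fin n, (∃ u : V, c u = i) → ∃ v : V, ∀ u : V, c u = i → u = v ∨ G.Adj v u)

/-- The domination chromatic number: the least number of colors in a domination coloring. -/
noncomputable def ddChrom {V : Type*} (G : SimpleGraph V) : ℕ :=
  sInf {n : ℕ | ∃ c : V → Fin n, IsDomColoring G c}

/-- There is always a domination coloring with `|V|` colors (every vertex its own color). -/
lemma exists_domColoring {V : Type*} [Fintype V] (G : SimpleGraph V) :
    ∃ c : V → Fin (Fintype.card V), IsDomColoring G c := by
  classical
  refine ⟨Fintype.equivFin V, ?_, ?_, ?_⟩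
  · intro u w h hc
    exact G.ne_of_adj h ((Fintype.equivFin V).injective hc)
  · intro w
    exact ⟨Fintype.equivFin V w, ⟨w, rfl⟩,
      fun u hu => Or.inl ((Fintype.equivFin V).injective hu)⟩
  · rintro k ⟨u, hu⟩
    exact ⟨u, fun y hy => Or.inl ((Fintype.equivFin V).injective (hy.trans hu.symm))⟩

/-- Vertex removal, upper bound: `χ_dd(G - v) ≤ χ_dd(G) + deg(v) - 1` for a
non-cut vertex `v` of a connected graph `G`. -/
theorem stmt1 {V : Type*} [Fintype V] (G : SimpleGraph V) [DecidableRel G.Adj]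
    (hG : G.Connected) (v : V)
    (hv : (G.induce {u : V | u ≠ v}).Connected) :
    ddChrom (G.induce {u : V | u ≠ v}) ≤ ddChrom G + G.degree v - 1 := by
  classical
  by_cases hVe : IsEmpty {u : V | u ≠ v}
  · have h0 : ddChrom (G.induce {u : V | u ≠ v}) ≤ 0 := by
      apply Nat.sInf_le
      exact ⟨fun x => (hVe.false x).elim, fun u => (hVe.false u).elim,
        fun u => (hVe.false u).elim, fun k => k.elim0⟩
    exact le_trans h0 (Nat.zero_le _)
  rw [not_isEmpty_iff] at hVe
  obtain ⟨⟨u₀, hu₀⟩⟩ := hVe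
  have hu₀' : u₀ ≠ v := hu₀
  -- the degree of v is positive
  have hd : 0 < G.degree v := by
    rw [SimpleGraph.degree_pos_iff_exists_adj]
    obtain ⟨p⟩ := hG.preconnected v u₀
    cases p with
    | nil => exact absurd rfl hu₀'
    | cons h _ => exact ⟨_, h⟩
  set n := ddChrom G with hn
  set d := G.degree v with hdd
  -- an optimal domination coloring of G
  have hmem : n ∈ {m | ∃ c : V → Fin m, IsDomColoring G c} :=
    Nat.sInf_mem ⟨Fintype.card V, exists_domColoring G⟩
  obtain ⟨c, hprop, hdom, hcls⟩ := hmem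
  -- v dominates color class i
  obtain ⟨i, ⟨wi, hwi⟩, hidom⟩ := hdom v
  set N := G.neighborFinset v with hN
  have hw0' : ∃ w0, w0 ∈ N := Finset.card_pos.mp hd
  obtain ⟨w0, hw0⟩ := hw0'
  have hw0v : w0 ≠ v := (G.ne_of_adj ((G.mem_neighborFinset v w0).mp hw0)).symm
  set N' := N.erase w0 with hN'def
  have hN' : N'.card = d - 1 := by
    rw [hN'def, Finset.card_erase_of_mem hw0]
    rfl
  -- the new coloring
  set c' : {u : V | u ≠ v} → Fin (n + (d - 1)) := fun u =>
    if h : (u : V) ∈ N then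
      if he : (u : V) = w0 then Fin.castAdd (d - 1) i
      else Fin.natAdd n (Fin.cast hN' (N'.equivFin ⟨(u : V), Finset.mem_erase.mpr ⟨he, h⟩⟩))
    else Fin.castAdd (d - 1) (c (u : V)) with hc'def
  -- color classes of neighbors of v are singletons
  have Lsing : ∀ (x : {u : V | u ≠ v}), (x : V) ∈ N →
      ∀ (y : {u : V | u ≠ v}), c' y = c' x → y = x := by
    intro x hx y hyx
    simp only [hc'def] at hyx
    rw [dif_pos hx] at hyx
    by_cases hxw : (x : V) = w0
    · rw [dif_pos hxw] at hyx
      split_ifs at hyx with h1 h2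
      · exact Subtype.ext (h2.trans hxw.symm)
      · have hval := congrArg Fin.val hyx
        have : (i : ℕ) < n := i.isLt
        simp only [Fin.natAdd, Fin.castAdd, Fin.castLE] at hval
        omega
      · have hcy : c (y : V) = i := by
          have hval := congrArg Fin.val hyx
          exact Fin.ext hval
        rcases hidom _ hcy with h | h
        · exact absurd h y.prop
        · exact absurd ((G.mem_neighborFinset v _).mpr h) h1
    · rw [dif_neg hxw] at hyx
      split_ifs at hyx with h1 h2
      · have hval := congrArg Fin.val hyx
        have : (i : ℕ) < n := i.isLt
        simp only [Fin.natAdd, Fin.castAdd, Fin.castLE] at hval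
        omega
      · have hval := congrArg Fin.val hyx
        simp only [Fin.natAdd, Fin.cast] at hval
        have hval2 : ((N'.equivFin ⟨(y : V), Finset.mem_erase.mpr ⟨h2, h1⟩⟩) : ℕ)
            = ((N'.equivFin ⟨(x : V), Finset.mem_erase.mpr ⟨hxw, hx⟩⟩) : ℕ) := by omega
        have h3 : (y : V) = (x : V) := Subtype.mk_eq_mk.mp (N'.equivFin.injective (Fin.ext hval2))
        exact Subtype.ext h3
      · have hval := congrArg Fin.val hyx
        have hlt : (c (y : V) : ℕ) < n := (c (y : V)).isLt
        simp only [Fin.natAdd, Fin.castAdd, Fin.castLE] at hval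
        omega
  -- non-neighbors keep their colors
  have LvalN : ∀ (y : {u : V | u ≠ v}), (y : V) ∉ N →
      c' y = Fin.castAdd (d - 1) (c (y : V)) := by
    intro y hy
    simp only [hc'def]
    rw [dif_neg hy]
  -- who can have an "old" color
  have Lnot : ∀ (y : {u : V | u ≠ v}) (k : Fin n), c' y = Fin.castAdd (d - 1) k →
      ((y : V) ∉ N ∧ c (y : V) = k) ∨ ((y : V) = w0 ∧ k = i) := by
    intro y k hy
    simp only [hc'def] at hy
    split_ifs at hy with h1 h2
    · exact Or.inr ⟨h2, (Fin.castAdd_inj.mp hy).symm⟩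
    · exfalso
      have hval := congrArg Fin.val hy
      have : (k : ℕ) < n := k.isLt
      simp only [Fin.natAdd, Fin.castAdd, Fin.castLE] at hval
      omega
    · exact Or.inl ⟨h1, Fin.castAdd_inj.mp hy⟩
  have key : ddChrom (G.induce {u : V | u ≠ v}) ≤ n + (d - 1) := by
    apply Nat.sInf_le
    refine ⟨c', ?_, ?_, ?_⟩
    -- properness
    · intro a b hab heq
      have Gab : G.Adj (a : V) (b : V) := hab
      by_cases ha : (a : V) ∈ N
      · have := Lsing a ha b heq.symm
        exact Gab.ne (congrArg Subtype.val this).symm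
      · by_cases hb : (b : V) ∈ N
        · have := Lsing b hb a heq
          exact Gab.ne (congrArg Subtype.val this)
        · rw [LvalN a ha, LvalN b hb] at heq
          exact hprop _ _ Gab (Fin.castAdd_inj.mp heq)
    -- every vertex dominates a class
    · intro u
      by_cases hu : (u : V) ∈ N
      · exact ⟨c' u, ⟨u, rfl⟩, fun y hy => Or.inl (Lsing u hu y hy)⟩
      · obtain ⟨j, ⟨x, hx⟩, hjdom⟩ := hdom (u : V)
        by_cases hmix : ∃ y, c y = j ∧ (y = v ∨ y ∈ N)
        · obtain ⟨y, hyj, hyy⟩ := hmix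
          have hyN : y ∈ N := by
            rcases hyy with h0 | h
            · rcases hjdom y hyj with h | h
              · exact absurd (h.symm.trans h0) u.prop
              · exact absurd ((G.mem_neighborFinset v _).mpr (h0 ▸ h).symm) hu
            · exact h
          have hyv : y ≠ v := (G.ne_of_adj ((G.mem_neighborFinset v y).mp hyN)).symm
          have hyu : G.Adj (u : V) y := by
            rcases hjdom y hyj with h | h
            · exact absurd (h ▸ hyN) hu
            · exact h
          refine ⟨c' ⟨y, hyv⟩, ⟨⟨y, hyv⟩, rfl⟩, fun z hz => ?_⟩
          have hzy := Lsing ⟨y, hyv⟩ hyN z hz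
          rw [hzy]
          exact Or.inr hyu
        · push_neg at hmix
          have hxv : x ≠ v := (hmix x hx).1
          have hxN : x ∉ N := (hmix x hx).2
          refine ⟨Fin.castAdd (d - 1) j, ⟨⟨x, hxv⟩, ?_⟩, fun z hz => ?_⟩
          · rw [LvalN ⟨x, hxv⟩ hxN]
            exact congrArg _ hx
          · rcases Lnot z j hz with ⟨hzN, hzj⟩ | ⟨hzw, hji⟩
            · rcases hjdom (z : V) hzj with h | h
              · exact Or.inl (Subtype.ext h)
              · exact Or.inr h
            · exfalso
              have := hmix wi (by rw [hwi, hji])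
              rcases hidom wi hwi with h | h
              · exact this.1 h
              · exact this.2 ((G.mem_neighborFinset v _).mpr h)
    -- every nonempty class is dominated
    · rintro k ⟨x, hx⟩
      by_cases hxN : (x : V) ∈ N
      · exact ⟨x, fun y hy => Or.inl (Lsing x hxN y (hy.trans hx.symm))⟩
      · have hk : k = Fin.castAdd (d - 1) (c (x : V)) := hx.symm.trans (LvalN x hxN)
        have hji : c (x : V) ≠ i := by
          intro h
          rcases hidom (x : V) h with h' | h'
          · exact x.prop h'
          · exact hxN ((G.mem_neighborFinset v _).mpr h')
        obtain ⟨z, hz⟩ := hcls (c (x : V)) ⟨(x : V), rfl⟩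
        have hzv : z ≠ v := by
          intro h
          subst h
          rcases hz (x : V) rfl with h' | h'
          · exact x.prop h'
          · exact hxN ((G.mem_neighborFinset z _).mpr h')
        refine ⟨⟨z, hzv⟩, fun y hy => ?_⟩
        rw [hk] at hy
        rcases Lnot y (c (x : V)) hy with ⟨hyN, hyj⟩ | ⟨_, hji'⟩
        · rcases hz (y : V) hyj with h | h
          · exact Or.inl (Subtype.ext h)
          · exact Or.inr h
        · exact absurd hji' hji
  have : n + (d - 1) = n + d - 1 := by omega
  rw [this] at key
  exact key
end

section
/- Let G be a finite simple connected graph and e an edge of G that is not a cut edge (bridge). Then χ_dd(G) - 1 ≤ χ_dd(G - e). -/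
/-- From a domination coloring of `G - uv` with `n` colors, one gets a domination
coloring of `G` with `n+1` colors, by giving `u` a fresh color. -/
lemma aux_A {V : Type*} (G : SimpleGraph V) (u v : V) {n : ℕ} (c : V → Fin n)
    (hc : IsDomColoring (G.deleteEdges {s(u, v)}) c) :
    ∃ c' : V → Fin (n + 1), IsDomColoring G c' := by
  classical
  obtain ⟨hp, hv, hcl⟩ := hc
  have hGH : ∀ a b, (G.deleteEdges {s(u, v)}).Adj a b → G.Adj a b :=
    fun a b h => (SimpleGraph.deleteEdges_adj.mp h).1
  have hHG : ∀ a b, G.Adj a b → s(a, b) ≠ s(u, v) → (G.deleteEdges {s(u, v)}).Adj a b := by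
    intro a b h hne
    rw [SimpleGraph.deleteEdges_adj]
    exact ⟨h, by simpa using hne⟩
  set c' : V → Fin (n + 1) := fun x => if x = u then Fin.last n else (c x).castSucc with hc'
  have hlast : ∀ z, c' z = Fin.last n → z = u := by
    intro z hz
    by_contra h
    simp only [hc', if_neg h] at hz
    exact (Fin.castSucc_lt_last (c z)).ne hz
  have hcs : ∀ z (j : Fin n), c' z = j.castSucc → z ≠ u ∧ c z = j := by
    intro z j hz
    have hzu : z ≠ u := by
      intro h
      subst h
      simp only [hc', if_pos rfl] at hz
      exact (Fin.castSucc_lt_last j).ne' hz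
    simp only [hc', if_neg hzu] at hz
    exact ⟨hzu, Fin.castSucc_injective n hz⟩
  refine ⟨c', ?_, ?_, ?_⟩
  · -- proper
    intro a b hab
    by_cases ha : a = u
    · have hb : b ≠ u := fun h => G.loopless.irrefl u (by rwa [ha, h] at hab)
      simp only [hc', if_pos ha, if_neg hb]
      exact (Fin.castSucc_lt_last (c b)).ne'
    · by_cases hb : b = u
      · simp only [hc', if_neg ha, if_pos hb]
        exact (Fin.castSucc_lt_last (c a)).ne
      · simp only [hc', if_neg ha, if_neg hb]
        intro h
        have hcab := Fin.castSucc_injective n h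
        have hsne : s(a, b) ≠ s(u, v) := by
          intro hs
          rcases Sym2.eq_iff.mp hs with ⟨h1, _⟩ | ⟨_, h2⟩
          · exact ha h1
          · exact hb h2
        exact hp a b (hHG a b hab hsne) hcab
  · -- every vertex dominates some class
    intro x
    obtain ⟨i, ⟨w0, hw0⟩, hdom⟩ := hv x
    by_cases hex : ∃ w, w ≠ u ∧ c w = i
    · obtain ⟨w, hwu, hwi⟩ := hex
      refine ⟨i.castSucc, ⟨w, by simp [hc', if_neg hwu, hwi]⟩, ?_⟩
      intro z hz
      obtain ⟨hzu, hzi⟩ := hcs z i hz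
      rcases hdom z hzi with h | h
      · exact Or.inl h
      · exact Or.inr (hGH _ _ h)
    · push_neg at hex
      have hw0u : w0 = u := by
        by_contra h
        exact hex w0 h hw0
      refine ⟨Fin.last n, ⟨u, by simp [hc']⟩, ?_⟩
      intro z hz
      have hz' := hlast z hz
      rcases hdom u (hw0u ▸ hw0) with h | h
      · exact Or.inl (hz'.trans h)
      · rw [hz']
        exact Or.inr (hGH _ _ h)
  · -- every nonempty class is dominated
    rintro i ⟨z0, hz0⟩
    by_cases hi : i = Fin.last n
    · refine ⟨u, fun z hz => Or.inl ?_⟩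
      exact (hlast z (hi ▸ hz)).trans rfl
    · obtain ⟨j, hj⟩ := Fin.exists_castSucc_eq.mpr hi
      subst hj
      obtain ⟨w, hw⟩ := hcl j ⟨z0, (hcs z0 j hz0).2⟩
      refine ⟨w, ?_⟩
      intro z hz
      obtain ⟨hzu, hzj⟩ := hcs z j hz
      rcases hw z hzj with h | h
      · exact Or.inl h
      · exact Or.inr (hGH _ _ h)

/-- From a domination coloring of `G` with `n` colors, one gets a domination coloring
of `G - uv` with `n+2` colors, by giving `u` and `v` fresh colors. -/
lemma aux_B {V : Type*} (G : SimpleGraph V) (u v : V) (huv : u ≠ v) {n : ℕ} (c : V → Fin n)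
    (hc : IsDomColoring G c) :
    ∃ c' : V → Fin (n + 2), IsDomColoring (G.deleteEdges {s(u, v)}) c' := by
  classical
  obtain ⟨hp, hv, hcl⟩ := hc
  have hGH : ∀ a b, (G.deleteEdges {s(u, v)}).Adj a b → G.Adj a b :=
    fun a b h => (SimpleGraph.deleteEdges_adj.mp h).1
  have hHG : ∀ a b, G.Adj a b → s(a, b) ≠ s(u, v) → (G.deleteEdges {s(u, v)}).Adj a b := by
    intro a b h hne
    rw [SimpleGraph.deleteEdges_adj]
    exact ⟨h, by simpa using hne⟩
  set cu : Fin (n + 2) := ⟨n, by omega⟩ with hcu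
  set cv : Fin (n + 2) := ⟨n + 1, by omega⟩ with hcv
  set emb : Fin n → Fin (n + 2) := fun j => ⟨j.val, by omega⟩ with hembdef
  have hembne_u : ∀ j, emb j ≠ cu := by
    intro j h
    have := congrArg Fin.val h
    simp [hembdef, hcu] at this
    omega
  have hembne_v : ∀ j, emb j ≠ cv := by
    intro j h
    have := congrArg Fin.val h
    simp [hembdef, hcv] at this
    omega
  have hcucv : cu ≠ cv := by
    intro h
    have := congrArg Fin.val h
    simp [hcu, hcv] at this
  have hembinj : Function.Injective emb := by
    intro a b h
    have h2 : (emb a).val = (emb b).val := congrArg Fin.val h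
    exact Fin.ext h2
  set c' : V → Fin (n + 2) := fun x => if x = u then cu else if x = v then cv else emb (c x)
    with hc'
  have hu : ∀ z, c' z = cu → z = u := by
    intro z hz
    by_contra h
    by_cases h2 : z = v
    · simp only [hc', if_neg h, if_pos h2] at hz
      exact hcucv hz.symm
    · simp only [hc', if_neg h, if_neg h2] at hz
      exact hembne_u _ hz
  have hvv : ∀ z, c' z = cv → z = v := by
    intro z hz
    by_cases h : z = u
    · subst h
      simp only [hc', if_pos rfl] at hz
      exact absurd hz hcucv
    · by_contra h2
      simp only [hc', if_neg h, if_neg h2] at hz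
      exact hembne_v _ hz
  have hemb : ∀ z (j : Fin n), c' z = emb j → z ≠ u ∧ z ≠ v ∧ c z = j := by
    intro z j hz
    have h1 : z ≠ u := by
      intro h
      subst h
      simp only [hc', if_pos rfl] at hz
      exact hembne_u j hz.symm
    have h2 : z ≠ v := by
      intro h
      subst h
      simp only [hc', if_neg (by exact fun hh => h1 hh), if_pos rfl] at hz
      exact hembne_v j hz.symm
    simp only [hc', if_neg h1, if_neg h2] at hz
    exact ⟨h1, h2, hembinj hz⟩
  have hedge : ∀ x z, z ≠ u → z ≠ v → G.Adj x z → (G.deleteEdges {s(u, v)}).Adj x z := by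
    intro x z hzu hzv h
    refine hHG x z h ?_
    intro hs
    rcases Sym2.eq_iff.mp hs with ⟨_, h2⟩ | ⟨_, h2⟩
    · exact hzv h2
    · exact hzu h2
  refine ⟨c', ?_, ?_, ?_⟩
  · -- proper
    intro a b hab
    have hGab := hGH a b hab
    by_cases ha : a = u
    · by_cases hb : b = v
      · simp only [hc', if_pos ha, if_neg (hb.trans_ne huv.symm : b ≠ u), if_pos hb]
        exact hcucv
      · have hbu : b ≠ u := fun h => G.loopless.irrefl u (by rwa [ha, h] at hGab)
        simp only [hc', if_pos ha, if_neg hbu, if_neg hb]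
        exact fun h => hembne_u _ h.symm
    · by_cases ha2 : a = v
      · by_cases hb : b = u
        · simp only [hc', if_neg ha, if_pos ha2, if_pos hb]
          exact hcucv.symm
        · have hbv : b ≠ v := fun h => G.loopless.irrefl v (by rwa [ha2, h] at hGab)
          simp only [hc', if_neg ha, if_pos ha2, if_neg hb, if_neg hbv]
          exact fun h => hembne_v _ h.symm
      · simp only [hc', if_neg ha, if_neg ha2]
        by_cases hb : b = u
        · simp only [if_pos hb]
          exact hembne_u _
        · by_cases hb2 : b = v
          · simp only [if_neg hb, if_pos hb2]
            exact hembne_v _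
          · simp only [if_neg hb, if_neg hb2]
            exact fun h => hp a b hGab (hembinj h)
  · -- every vertex dominates some class
    intro x
    by_cases hxu : x = u
    · exact ⟨cu, ⟨u, by simp [hc']⟩, fun z hz => Or.inl ((hu z hz).trans hxu.symm)⟩
    · by_cases hxv : x = v
      · exact ⟨cv, ⟨v, by simp [hc', if_neg huv.symm]⟩,
          fun z hz => Or.inl ((hvv z hz).trans hxv.symm)⟩
      · obtain ⟨i, ⟨w0, hw0⟩, hdom⟩ := hv x
        by_cases hex : ∃ w, w ≠ u ∧ w ≠ v ∧ c w = i
        · obtain ⟨w, hwu, hwv, hwi⟩ := hex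
          refine ⟨emb i, ⟨w, by simp [hc', if_neg hwu, if_neg hwv, hwi]⟩, ?_⟩
          intro z hz
          obtain ⟨hzu, hzv, hzi⟩ := hemb z i hz
          rcases hdom z hzi with h | h
          · exact Or.inl h
          · exact Or.inr (hedge x z hzu hzv h)
        · push_neg at hex
          have hw0uv : w0 = u ∨ w0 = v := by
            by_contra h
            push_neg at h
            exact hex w0 h.1 h.2 hw0
          have hadj : G.Adj x w0 := by
            rcases hdom w0 hw0 with h | h
            · exfalso
              rcases hw0uv with h2 | h2
              · exact hxu (h ▸ h2)
              · exact hxv (h ▸ h2)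
            · exact h
          have hHadj : (G.deleteEdges {s(u, v)}).Adj x w0 := by
            refine hHG x w0 hadj ?_
            intro hs
            rcases Sym2.eq_iff.mp hs with ⟨h1, _⟩ | ⟨h1, _⟩
            · exact hxu h1
            · exact hxv h1
          rcases hw0uv with h2 | h2
          · refine ⟨cu, ⟨u, by simp [hc']⟩, ?_⟩
            intro z hz
            have hzw : z = w0 := (hu z hz).trans h2.symm
            rw [hzw]
            exact Or.inr hHadj
          · refine ⟨cv, ⟨v, by simp [hc', if_neg huv.symm]⟩, ?_⟩
            intro z hz
            have hzw : z = w0 := (hvv z hz).trans h2.symm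
            rw [hzw]
            exact Or.inr hHadj
  · -- every nonempty class is dominated
    rintro i ⟨z0, hz0⟩
    by_cases hiu : i = cu
    · exact ⟨u, fun z hz => Or.inl (hu z (hiu ▸ hz))⟩
    · by_cases hiv : i = cv
      · exact ⟨v, fun z hz => Or.inl (hvv z (hiv ▸ hz))⟩
      · have hival : i.val < n := by
          have h1 : i.val ≠ n := fun h => hiu (Fin.ext h)
          have h2 : i.val ≠ n + 1 := fun h => hiv (Fin.ext h)
          have := i.isLt
          omega
        have hieq : i = emb ⟨i.val, hival⟩ := Fin.ext rfl
        rw [hieq] at hz0 ⊢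
        obtain ⟨w, hw⟩ := hcl ⟨i.val, hival⟩ ⟨z0, (hemb z0 _ hz0).2.2⟩
        refine ⟨w, ?_⟩
        intro z hz
        obtain ⟨hzu, hzv, hzj⟩ := hemb z _ hz
        rcases hw z hzj with h | h
        · exact Or.inl h
        · exact Or.inr (hedge w z hzu hzv h)

/-- Edge removal, lower bound: for a non-bridge edge `e = uv` of a connected graph `G`,
`χ_dd(G) - 1 ≤ χ_dd(G - e)`. -/
theorem stmt2 {V : Type*} (G : SimpleGraph V) (hG : G.Connected) (u v : V)
    (he : G.Adj u v) (hb : ¬ G.IsBridge s(u, v)) :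
    ddChrom G - 1 ≤ ddChrom (G.deleteEdges {s(u, v)}) := by
  classical
  by_cases hS : {n : ℕ | ∃ c : V → Fin n, IsDomColoring (G.deleteEdges {s(u, v)}) c}.Nonempty
  · obtain ⟨c, hc⟩ := Nat.sInf_mem hS
    obtain ⟨c', hc'⟩ := aux_A G u v c hc
    have h1 : ddChrom G ≤
        sInf {n : ℕ | ∃ c : V → Fin n, IsDomColoring (G.deleteEdges {s(u, v)}) c} + 1 :=
      Nat.sInf_le ⟨c', hc'⟩
    have h2 : ddChrom (G.deleteEdges {s(u, v)}) =
        sInf {n : ℕ | ∃ c : V → Fin n, IsDomColoring (G.deleteEdges {s(u, v)}) c} := rfl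
    omega
  · have hT : {n : ℕ | ∃ c : V → Fin n, IsDomColoring G c} = ∅ := by
      ext n
      simp only [Set.mem_setOf_eq, Set.mem_empty_iff_false, iff_false]
      rintro ⟨c, hc⟩
      obtain ⟨c', hc'⟩ := aux_B G u v he.ne c hc
      exact hS ⟨n + 2, c', hc'⟩
    have hG0 : ddChrom G = 0 := by
      unfold ddChrom
      rw [hT]
      exact Nat.sInf_empty
    omega
end

section
/- Let G be a finite simple connected graph and e an edge of G that is not a cut edge (bridge). Then χ_dd(G - e) ≤ χ_dd(G) + 2. -/
lemma key {V : Type*} (G₁ G₂ : SimpleGraph V) (u v : V) (huv : u ≠ v)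
    (h12 : ∀ a b, G₁.Adj a b → (a = u ∧ b = v) ∨ (a = v ∧ b = u) ∨ G₂.Adj a b)
    (h21 : ∀ a b, a ≠ u → a ≠ v → b ≠ u → b ≠ v → G₂.Adj a b → G₁.Adj a b)
    {n : ℕ} (c : V → Fin n) (hc : IsDomColoring G₁ c) :
    ∃ c' : V → Fin (n + 2), IsDomColoring G₂ c' := by
  classical
  obtain ⟨hp, hd1, hd2⟩ := hc
  set c' : V → Fin (n + 2) := fun x =>
    if x = u then ⟨n, by omega⟩ else if x = v then ⟨n + 1, by omega⟩
    else ⟨(c x).val, (c x).isLt.trans (by omega)⟩ with hc'def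
  have hvu : (c' u).val = n := by simp [hc'def]
  have hvv : (c' v).val = n + 1 := by simp [hc'def, huv, Ne.symm huv]
  have hvo : ∀ x, x ≠ u → x ≠ v → (c' x).val = (c x).val := by
    intro x hx1 hx2; simp [hc'def, hx1, hx2]
  have hlt : ∀ x, x ≠ u → x ≠ v → (c' x).val < n := by
    intro x hx1 hx2; rw [hvo x hx1 hx2]; exact (c x).isLt
  -- membership characterizations
  have memu : ∀ x, (c' x).val = n → x = u := by
    intro x hx
    by_cases h1 : x = u; · exact h1
    by_cases h2 : x = v
    · subst h2; rw [hvv] at hx; omega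
    · have := hlt x h1 h2; omega
  have memv : ∀ x, (c' x).val = n + 1 → x = v := by
    intro x hx
    by_cases h1 : x = u; · subst h1; rw [hvu] at hx; omega
    by_cases h2 : x = v; · exact h2
    · have := hlt x h1 h2; omega
  refine ⟨c', ?_, ?_, ?_⟩
  · -- proper
    intro a b hab heq
    have hne : a ≠ b := hab.ne
    have hveq : (c' a).val = (c' b).val := congrArg Fin.val heq
    by_cases ha1 : a = u
    · rw [ha1, hvu] at hveq
      by_cases hb2 : b = v
      · rw [hb2, hvv] at hveq; omega
      · have hb1 : b ≠ u := fun h => hne (ha1.trans h.symm)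
        have := hlt b hb1 hb2; omega
    by_cases ha2 : a = v
    · rw [ha2, hvv] at hveq
      by_cases hb1 : b = u
      · rw [hb1, hvu] at hveq; omega
      · have hb2 : b ≠ v := fun h => hne (ha2.trans h.symm)
        have := hlt b hb1 hb2; omega
    by_cases hb1 : b = u
    · rw [hb1, hvu] at hveq; have := hlt a ha1 ha2; omega
    by_cases hb2 : b = v
    · rw [hb2, hvv] at hveq; have := hlt a ha1 ha2; omega
    · have hadj := h21 a b ha1 ha2 hb1 hb2 hab
      have := hp a b hadj
      rw [hvo a ha1 ha2, hvo b hb1 hb2] at hveq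
      exact this (Fin.ext hveq)
  · -- every vertex dominates a class
    intro w
    -- adjacency transfer for pairs avoiding {u,v} on one side
    have trans : ∀ a b, ¬(a = u ∧ b = v) → ¬(a = v ∧ b = u) → G₁.Adj a b → G₂.Adj a b := by
      intro a b h1 h2 hab
      rcases h12 a b hab with h | h | h
      · exact absurd h h1
      · exact absurd h h2
      · exact h
    by_cases hw1 : w = u
    · refine ⟨⟨n, by omega⟩, ⟨u, Fin.ext hvu⟩, ?_⟩
      intro x hx
      exact Or.inl ((memu x (congrArg Fin.val hx)).trans hw1.symm)
    by_cases hw2 : w = v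
    · refine ⟨⟨n + 1, by omega⟩, ⟨v, Fin.ext hvv⟩, ?_⟩
      intro x hx
      exact Or.inl ((memv x (congrArg Fin.val hx)).trans hw2.symm)
    · obtain ⟨i, ⟨x₀, hx₀⟩, hdom⟩ := hd1 w
      by_cases hex : ∃ x, x ≠ u ∧ x ≠ v ∧ c x = i
      · obtain ⟨x, hx1, hx2, hxi⟩ := hex
        refine ⟨⟨i.val, i.isLt.trans (by omega)⟩, ⟨x, Fin.ext (by rw [hvo x hx1 hx2, hxi])⟩, ?_⟩
        intro y hy
        have hyval : (c' y).val = i.val := congrArg Fin.val hy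
        have hy1 : y ≠ u := by intro h; subst h; rw [hvu] at hyval; have := i.isLt; omega
        have hy2 : y ≠ v := by intro h; subst h; rw [hvv] at hyval; have := i.isLt; omega
        have hyi : c y = i := Fin.ext (by rw [← hvo y hy1 hy2]; exact hyval)
        rcases hdom y hyi with h | h
        · exact Or.inl h
        · exact Or.inr (trans w y (fun hh => hw1 hh.1) (fun hh => hw2 hh.1) h)
      · push_neg at hex
        -- x₀ ∈ {u, v}
        by_cases hx01 : x₀ = u
        · have hadj : G₁.Adj w u := by
            rcases hdom x₀ hx₀ with h | h
            · exact absurd (h.symm.trans hx01) hw1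
            · exact hx01 ▸ h
          have hadj2 : G₂.Adj w u := trans w u (fun hh => hw1 hh.1) (fun hh => hw2 hh.1) hadj
          refine ⟨⟨n, by omega⟩, ⟨u, Fin.ext hvu⟩, ?_⟩
          intro y hy
          rw [memu y (congrArg Fin.val hy)]
          exact Or.inr hadj2
        · have hx02 : x₀ = v := by
            by_contra hx02
            exact hex x₀ hx01 hx02 hx₀
          have hadj : G₁.Adj w v := by
            rcases hdom x₀ hx₀ with h | h
            · exact absurd (h.symm.trans hx02) hw2
            · exact hx02 ▸ h
          have hadj2 : G₂.Adj w v := trans w v (fun hh => hw1 hh.1) (fun hh => hw2 hh.1) hadj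
          refine ⟨⟨n + 1, by omega⟩, ⟨v, Fin.ext hvv⟩, ?_⟩
          intro y hy
          rw [memv y (congrArg Fin.val hy)]
          exact Or.inr hadj2
  · -- every nonempty class dominated
    intro i ⟨x, hx⟩
    have trans : ∀ a b, ¬(a = u ∧ b = v) → ¬(a = v ∧ b = u) → G₁.Adj a b → G₂.Adj a b := by
      intro a b h1 h2 hab
      rcases h12 a b hab with h | h | h
      · exact absurd h h1
      · exact absurd h h2
      · exact h
    by_cases hin : i.val = n
    · refine ⟨u, ?_⟩
      intro y hy
      have : (c' y).val = n := by rw [congrArg Fin.val hy, hin]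
      exact Or.inl (memu y this)
    by_cases hin1 : i.val = n + 1
    · refine ⟨v, ?_⟩
      intro y hy
      have : (c' y).val = n + 1 := by rw [congrArg Fin.val hy, hin1]
      exact Or.inl (memv y this)
    · have hilt : i.val < n := by have := i.isLt; omega
      have hx1 : x ≠ u := by intro h; subst h; have := congrArg Fin.val hx; rw [hvu] at this; omega
      have hx2 : x ≠ v := by intro h; subst h; have := congrArg Fin.val hx; rw [hvv] at this; omega
      have hxi : c x = ⟨i.val, hilt⟩ := Fin.ext (by rw [← hvo x hx1 hx2]; exact congrArg Fin.val hx)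
      obtain ⟨w, hw⟩ := hd2 ⟨i.val, hilt⟩ ⟨x, hxi⟩
      refine ⟨w, ?_⟩
      intro y hy
      have hyval : (c' y).val = i.val := congrArg Fin.val hy
      have hy1 : y ≠ u := by intro h; subst h; rw [hvu] at hyval; omega
      have hy2 : y ≠ v := by intro h; subst h; rw [hvv] at hyval; omega
      have hyi : c y = ⟨i.val, hilt⟩ := Fin.ext (by rw [← hvo y hy1 hy2]; exact hyval)
      rcases hw y hyi with h | h
      · exact Or.inl h
      · refine Or.inr (trans w y ?_ ?_ h)
        · rintro ⟨_, rfl⟩; exact hy2 rfl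
        · rintro ⟨_, rfl⟩; exact hy1 rfl

/-- Edge removal, upper bound: for a non-bridge edge `e = uv` of a connected graph `G`,
`χ_dd(G - e) ≤ χ_dd(G) + 2`. -/
theorem stmt3 {V : Type*} (G : SimpleGraph V) (hG : G.Connected) (u v : V)
    (he : G.Adj u v) (hb : ¬ G.IsBridge s(u, v)) :
    ddChrom (G.deleteEdges {s(u, v)}) ≤ ddChrom G + 2 := by
  classical
  set G' := G.deleteEdges {s(u, v)} with hG'
  have huv : u ≠ v := he.ne
  have hsub : ∀ a b, G'.Adj a b → G.Adj a b := by
    intro a b h; exact (SimpleGraph.deleteEdges_adj.1 h).1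
  have h12 : ∀ a b, G.Adj a b → (a = u ∧ b = v) ∨ (a = v ∧ b = u) ∨ G'.Adj a b := by
    intro a b hab
    by_cases hh : s(a, b) = s(u, v)
    · rcases Sym2.eq_iff.1 hh with ⟨h1, h2⟩ | ⟨h1, h2⟩
      · exact Or.inl ⟨h1, h2⟩
      · exact Or.inr (Or.inl ⟨h1, h2⟩)
    · exact Or.inr (Or.inr (SimpleGraph.deleteEdges_adj.2 ⟨hab, by simpa using hh⟩))
  have h21 : ∀ a b, a ≠ u → a ≠ v → b ≠ u → b ≠ v → G.Adj a b → G'.Adj a b := by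
    intro a b ha1 ha2 hb1 hb2 hab
    refine SimpleGraph.deleteEdges_adj.2 ⟨hab, ?_⟩
    simp only [Set.mem_singleton_iff]
    intro hh
    rcases Sym2.eq_iff.1 hh with ⟨h1, _⟩ | ⟨h1, _⟩
    · exact ha1 h1
    · exact ha2 h1
  by_cases hS : {n : ℕ | ∃ c : V → Fin n, IsDomColoring G c}.Nonempty
  · obtain ⟨c, hc⟩ := Nat.sInf_mem hS
    obtain ⟨c', hc'⟩ := key G G' u v huv h12 (fun a b _ _ _ _ h => hsub a b h) c hc
    exact Nat.sInf_le ⟨c', hc'⟩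
  · have hS' : ¬ {n : ℕ | ∃ c : V → Fin n, IsDomColoring G' c}.Nonempty := by
      rintro ⟨m, c, hc⟩
      refine hS ⟨m + 2, ?_⟩
      exact key G' G u v huv (fun a b h => Or.inr (Or.inr (hsub a b h))) h21 c hc
    rw [Set.not_nonempty_iff_eq_empty] at hS'
    unfold ddChrom
    rw [hG'] at hS' ⊢
    rw [hS', Nat.sInf_empty]
    omega
end

section
/- Let G be a finite simple connected graph and e = uv an edge of G. Then χ_dd(G ∘ e) ≤ χ_dd(G) + 1, where G ∘ e is the graph obtained from G by contracting the edge e. -/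
/-- Contraction identifying `v` into `u`. -/
def contractPair {V : Type*} (G : SimpleGraph V) (u v : V) : SimpleGraph {w : V // w ≠ v} where
  Adj a b := (a : V) ≠ (b : V) ∧
    (G.Adj a b ∨ ((a : V) = u ∧ G.Adj v b) ∨ ((b : V) = u ∧ G.Adj v a))
  symm := by
    constructor
    rintro a b ⟨h1, h2⟩
    refine ⟨fun h => h1 h.symm, ?_⟩
    rcases h2 with h | ⟨h, h'⟩ | ⟨h, h'⟩
    · exact Or.inl h.symm
    · exact Or.inr (Or.inr ⟨h, h'⟩)
    · exact Or.inr (Or.inl ⟨h, h'⟩)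
  loopless := ⟨fun a h => h.1 rfl⟩


theorem liftDomColoring {V : Type*} (G : SimpleGraph V) (u v : V) (he : G.Adj u v)
    (k : ℕ) (c : V → Fin k) (hc : IsDomColoring G c) :
    ∃ c' : {w : V // w ≠ v} → Fin (k+1), IsDomColoring (contractPair G u v) c' := by
  classical
  have hne : u ≠ v := he.ne
  obtain ⟨hp, hvd, hcd⟩ := hc
  refine ⟨fun w => if (w : V) = u then ⟨k, by omega⟩
      else ⟨(c w.1).1, by have := (c w.1).isLt; omega⟩, ?_, ?_, ?_⟩
  · -- proper
    rintro a b ⟨hab1, hab2⟩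
    dsimp only
    split_ifs with h1 h2 h2
    · exact absurd (h1.trans h2.symm) hab1
    · simp only [ne_eq, Fin.mk.injEq]
      have := (c b.1).isLt; omega
    · simp only [ne_eq, Fin.mk.injEq]
      have := (c a.1).isLt; omega
    · have hadj : G.Adj a.1 b.1 := by
        rcases hab2 with h | ⟨h, _⟩ | ⟨h, _⟩
        · exact h
        · exact absurd h h1
        · exact absurd h h2
      have := hp a.1 b.1 hadj
      simp only [ne_eq, Fin.mk.injEq]
      intro hv
      exact this (Fin.ext hv)
  · -- vertex domination
    rintro ⟨w, hw⟩
    by_cases hwu : w = u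
    · refine ⟨⟨k, by omega⟩, ⟨⟨u, hne⟩, by simp⟩, ?_⟩
      rintro ⟨y, hy⟩ hcy
      dsimp only at hcy
      split_ifs at hcy with h1
      · left; exact Subtype.ext (h1.trans hwu.symm)
      · exfalso
        have := (c y).isLt
        simp only [Fin.mk.injEq] at hcy
        omega
    · obtain ⟨i, ⟨z, hz⟩, hdom⟩ := hvd w
      by_cases hmem : ∃ x : V, x ≠ u ∧ x ≠ v ∧ c x = i
      · obtain ⟨x, hx1, hx2, hx3⟩ := hmem
        refine ⟨⟨i.1, by have := i.isLt; omega⟩, ⟨⟨x, hx2⟩, by simp [hx1, hx3]⟩, ?_⟩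
        rintro ⟨y, hy⟩ hcy
        dsimp only at hcy
        split_ifs at hcy with h1
        · exfalso
          simp only [Fin.mk.injEq] at hcy
          have := i.isLt; omega
        · simp only [Fin.mk.injEq] at hcy
          have hcyi : c y = i := Fin.ext hcy
          rcases hdom y hcyi with h | h
          · left; exact Subtype.ext h
          · right; exact ⟨h.ne, Or.inl h⟩
      · push_neg at hmem
        have hzuv : z = u ∨ z = v := by
          by_contra hcon
          push_neg at hcon
          exact hmem z hcon.1 hcon.2 hz
        have hadjwz : G.Adj w z := by
          rcases hdom z hz with h | h
          · exfalso
            rcases hzuv with rfl | rfl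
            · exact hwu h.symm
            · exact hw h.symm
          · exact h
        refine ⟨⟨k, by omega⟩, ⟨⟨u, hne⟩, by simp⟩, ?_⟩
        rintro ⟨y, hy⟩ hcy
        dsimp only at hcy
        split_ifs at hcy with h1
        · right
          subst h1
          refine ⟨hwu, ?_⟩
          rcases hzuv with rfl | rfl
          · exact Or.inl hadjwz
          · exact Or.inr (Or.inr ⟨rfl, hadjwz.symm⟩)
        · exfalso
          have := (c y).isLt
          simp only [Fin.mk.injEq] at hcy
          omega
  · -- class domination
    rintro i ⟨⟨x, hx⟩, hcx⟩
    by_cases hik : i.1 = k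
    · refine ⟨⟨u, hne⟩, ?_⟩
      rintro ⟨y, hy⟩ hcy
      dsimp only at hcy
      split_ifs at hcy with h1
      · left; exact Subtype.ext h1
      · exfalso
        have := (c y).isLt
        simp only [Fin.ext_iff] at hcy
        omega
    · dsimp only at hcx
      have hxu : x ≠ u := by
        intro hh
        rw [if_pos hh] at hcx
        simp only [Fin.ext_iff] at hcx
        omega
      rw [if_neg hxu] at hcx
      have hik' : i.1 < k := by have := i.isLt; omega
      have hcxval : (c x).1 = i.1 := by simpa [Fin.ext_iff] using hcx
      obtain ⟨z, hzdom⟩ := hcd ⟨i.1, hik'⟩ ⟨x, Fin.ext hcxval⟩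
      by_cases hzv : z = v
      · refine ⟨⟨u, hne⟩, ?_⟩
        rintro ⟨y, hy⟩ hcy
        dsimp only at hcy
        split_ifs at hcy with h1
        · exfalso; simp only [Fin.ext_iff] at hcy; omega
        · simp only [Fin.ext_iff] at hcy
          have hcyv : c y = ⟨i.1, hik'⟩ := Fin.ext hcy
          rcases hzdom y hcyv with h | h
          · exact absurd (h.trans hzv) hy
          · right
            exact ⟨fun hh => h1 hh.symm, Or.inr (Or.inl ⟨rfl, hzv ▸ h⟩)⟩
      · refine ⟨⟨z, hzv⟩, ?_⟩
        rintro ⟨y, hy⟩ hcy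
        dsimp only at hcy
        split_ifs at hcy with h1
        · exfalso; simp only [Fin.ext_iff] at hcy; omega
        · simp only [Fin.ext_iff] at hcy
          have hcyv : c y = ⟨i.1, hik'⟩ := Fin.ext hcy
          rcases hzdom y hcyv with h | h
          · left; exact Subtype.ext h
          · right; exact ⟨h.ne, Or.inl h⟩

theorem unliftDomColoring {V : Type*} (G : SimpleGraph V) (u v : V) (he : G.Adj u v)
    (n : ℕ) (c : {w : V // w ≠ v} → Fin n)
    (hc : IsDomColoring (contractPair G u v) c) :
    ∃ f : V → Fin (2*n+2), IsDomColoring G f := by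
  classical
  have hne : u ≠ v := he.ne
  obtain ⟨hp, hvd, hcd⟩ := hc
  let f : V → Fin (2*n+2) := fun x =>
    if hv : x = v then ⟨2*n, by omega⟩
    else if x = u then ⟨2*n+1, by omega⟩
    else if G.Adj u x then ⟨2*(c ⟨x, hv⟩).1, by have := (c ⟨x, hv⟩).isLt; omega⟩
    else ⟨2*(c ⟨x, hv⟩).1+1, by have := (c ⟨x, hv⟩).isLt; omega⟩
  have hfv : (f v).1 = 2*n := by simp [f]
  have hfu : (f u).1 = 2*n+1 := by simp [f, hne]
  have hfo1 : ∀ (x : V) (h1 : x ≠ v), x ≠ u → G.Adj u x → (f x).1 = 2*(c ⟨x, h1⟩).1 := by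
    intro x h1 h2 h3; simp [f, h1, h2, h3]
  have hfo2 : ∀ (x : V) (h1 : x ≠ v), x ≠ u → ¬G.Adj u x → (f x).1 = 2*(c ⟨x, h1⟩).1+1 := by
    intro x h1 h2 h3; simp [f, h1, h2, h3]
  have hfo : ∀ (x : V) (h1 : x ≠ v), x ≠ u →
      (f x).1 = 2*(c ⟨x, h1⟩).1 ∨ (f x).1 = 2*(c ⟨x, h1⟩).1+1 := by
    intro x h1 h2
    by_cases h3 : G.Adj u x
    · exact Or.inl (hfo1 x h1 h2 h3)
    · exact Or.inr (hfo2 x h1 h2 h3)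
  have hclt : ∀ (x : V) (h1 : x ≠ v), (c ⟨x, h1⟩).1 < n := fun x h1 => (c ⟨x, h1⟩).isLt
  -- key: extracting info from color equalities
  have hwu' : ∀ (w : V), f w = f u → w = u := by
    intro w hw
    have h := congrArg Fin.val hw
    rw [hfu] at h
    by_cases hwv : w = v
    · subst hwv; rw [hfv] at h; omega
    · by_cases hwu : w = u
      · exact hwu
      · exfalso; rcases hfo w hwv hwu with h' | h' <;>
          (rw [h'] at h; have := hclt w hwv; omega)
  have hwv' : ∀ (w : V), f w = f v → w = v := by
    intro w hw
    have h := congrArg Fin.val hw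
    rw [hfv] at h
    by_cases hwv : w = v
    · exact hwv
    · exfalso
      by_cases hwu : w = u
      · subst hwu; rw [hfu] at h; omega
      · rcases hfo w hwv hwu with h' | h' <;>
          (rw [h'] at h; have := hclt w hwv; omega)
  have hsame : ∀ (w x : V) (hwv : w ≠ v) (hxv : x ≠ v), w ≠ u → x ≠ u → f w = f x →
      c ⟨w, hwv⟩ = c ⟨x, hxv⟩ := by
    intro w x hwv hxv hwu hxu hw
    have h := congrArg Fin.val hw
    apply Fin.ext
    rcases hfo w hwv hwu with h1 | h1 <;> rcases hfo x hxv hxu with h2 | h2 <;>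
      (rw [h1, h2] at h; omega)
  refine ⟨f, ?_, ?_, ?_⟩
  · -- proper
    intro a b hab
    intro hfab
    have h := congrArg Fin.val hfab
    by_cases hav : a = v
    · by_cases hbv : b = v
      · exact hab.ne (hav.trans hbv.symm)
      · by_cases hbu : b = u
        · rw [hav, hbu, hfv, hfu] at h; omega
        · rw [hav, hfv] at h; rcases hfo b hbv hbu with h' | h' <;>
            (rw [h'] at h; have := hclt b hbv; omega)
    · by_cases hau : a = u
      · by_cases hbv : b = v
        · rw [hau, hbv, hfu, hfv] at h; omega
        · by_cases hbu : b = u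
          · exact hab.ne (hau.trans hbu.symm)
          · rw [hau, hfu] at h; rcases hfo b hbv hbu with h' | h' <;>
              (rw [h'] at h; have := hclt b hbv; omega)
      · by_cases hbv : b = v
        · rw [hbv, hfv] at h; rcases hfo a hav hau with h' | h' <;>
            (rw [h'] at h; have := hclt a hav; omega)
        · by_cases hbu : b = u
          · rw [hbu, hfu] at h; rcases hfo a hav hau with h' | h' <;>
              (rw [h'] at h; have := hclt a hav; omega)
          · have hS : (contractPair G u v).Adj ⟨a, hav⟩ ⟨b, hbv⟩ := ⟨hab.ne, Or.inl hab⟩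
            exact hp _ _ hS (hsame a b hav hbv hau hbu hfab)
  · -- vertex domination
    intro x
    by_cases hxv : x = v
    · refine ⟨f v, ⟨v, rfl⟩, ?_⟩
      intro w hw
      exact Or.inl ((hwv' w hw).trans hxv.symm)
    · by_cases hxu : x = u
      · refine ⟨f u, ⟨u, rfl⟩, ?_⟩
        intro w hw
        exact Or.inl ((hwu' w hw).trans hxu.symm)
      · obtain ⟨i, ⟨z, hz⟩, hdom⟩ := hvd ⟨x, hxv⟩
        by_cases hmem : ∃ (y : V) (h1 : y ≠ v), y ≠ u ∧ c ⟨y, h1⟩ = i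
        · obtain ⟨y, h1, h2, h3⟩ := hmem
          refine ⟨f y, ⟨y, rfl⟩, ?_⟩
          intro w hw
          have hwv : w ≠ v := by
            intro hh
            have h := congrArg Fin.val hw
            rw [hh, hfv] at h
            rcases hfo y h1 h2 with h' | h' <;> (rw [h'] at h; have := hclt y h1; omega)
          have hwu : w ≠ u := by
            intro hh
            have h := congrArg Fin.val hw
            rw [hh, hfu] at h
            rcases hfo y h1 h2 with h' | h' <;> (rw [h'] at h; have := hclt y h1; omega)
          have hcw : c ⟨w, hwv⟩ = i := (hsame w y hwv h1 hwu h2 hw).trans h3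
          rcases hdom ⟨w, hwv⟩ hcw with h | h
          · exact Or.inl (congrArg Subtype.val h)
          · right
            rcases h.2 with h' | ⟨h', _⟩ | ⟨h', _⟩
            · exact h'
            · exact absurd h' hxu
            · exact absurd h' hwu
        · have hzu : (z : V) = u := by
            by_contra hcon
            exact hmem ⟨z.1, z.2, hcon, by rw [Subtype.coe_eta]; exact hz⟩
          have hzeq : z = ⟨u, hne⟩ := Subtype.ext hzu
          rcases hdom z hz with h | h
          · exact absurd (congrArg Subtype.val (hzeq ▸ h)).symm hxu
          · rw [hzeq] at h
            rcases h.2 with h' | ⟨h', _⟩ | ⟨_, h'⟩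
            · -- G.Adj x u
              refine ⟨f u, ⟨u, rfl⟩, ?_⟩
              intro w hw
              right
              rw [hwu' w hw]
              exact h'
            · exact absurd h' hxu
            · -- G.Adj v x
              refine ⟨f v, ⟨v, rfl⟩, ?_⟩
              intro w hw
              right
              rw [hwv' w hw]
              exact h'.symm
  · -- class domination
    rintro j ⟨x, hx⟩
    subst hx
    by_cases hxv : x = v
    · refine ⟨x, fun w hw => ?_⟩
      rw [hxv] at hw
      exact Or.inl ((hwv' w hw).trans hxv.symm)
    · by_cases hxu : x = u
      · refine ⟨x, fun w hw => ?_⟩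
        rw [hxu] at hw
        exact Or.inl ((hwu' w hw).trans hxu.symm)
      · by_cases hadj : G.Adj u x
        · -- all members adjacent to u
          refine ⟨u, ?_⟩
          intro w hw
          have h := congrArg Fin.val hw
          rw [hfo1 x hxv hxu hadj] at h
          by_cases hwv : w = v
          · rw [hwv, hfv] at h; have := hclt x hxv; omega
          · by_cases hwu : w = u
            · exact Or.inl hwu
            · right
              by_cases hadjw : G.Adj u w
              · exact hadjw
              · rw [hfo2 w hwv hwu hadjw] at h
                exfalso; omega
        · obtain ⟨z, hdom⟩ := hcd (c ⟨x, hxv⟩) ⟨⟨x, hxv⟩, rfl⟩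
          by_cases hzu : (z : V) = u
          · -- dominator v
            refine ⟨v, ?_⟩
            intro w hw
            have h := congrArg Fin.val hw
            rw [hfo2 x hxv hxu hadj] at h
            by_cases hwv : w = v
            · exact Or.inl hwv
            · by_cases hwu : w = u
              · rw [hwu, hfu] at h; have := hclt x hxv; omega
              · right
                have hadjw : ¬G.Adj u w := by
                  intro hcon
                  rw [hfo1 w hwv hwu hcon] at h; omega
                have hcw : c ⟨w, hwv⟩ = c ⟨x, hxv⟩ := hsame w x hwv hxv hwu hxu hw
                have hzeq : z = ⟨u, hne⟩ := Subtype.ext hzu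
                rcases hdom ⟨w, hwv⟩ hcw with h' | h'
                · exact absurd (congrArg Subtype.val (hzeq ▸ h')) hwu
                · rw [hzeq] at h'
                  rcases h'.2 with h'' | ⟨_, h''⟩ | ⟨h'', _⟩
                  · exact absurd h'' hadjw
                  · exact h''
                  · exact absurd h'' hwu
          · -- dominator z.1
            refine ⟨z.1, ?_⟩
            intro w hw
            have h := congrArg Fin.val hw
            rw [hfo2 x hxv hxu hadj] at h
            by_cases hwv : w = v
            · rw [hwv, hfv] at h; have := hclt x hxv; omega
            · by_cases hwu : w = u
              · rw [hwu, hfu] at h; have := hclt x hxv; omega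
              · have hcw : c ⟨w, hwv⟩ = c ⟨x, hxv⟩ := hsame w x hwv hxv hwu hxu hw
                rcases hdom ⟨w, hwv⟩ hcw with h' | h'
                · exact Or.inl (congrArg Subtype.val h')
                · right
                  rcases h'.2 with h'' | ⟨h'', _⟩ | ⟨h'', _⟩
                  · exact h''
                  · exact absurd h'' hzu
                  · exact absurd h'' hwu

/-- Edge contraction, upper bound: `χ_dd(G ∘ e) ≤ χ_dd(G) + 1` for an edge `e = uv`
of a connected graph `G`. -/
theorem stmt4 {V : Type*} (G : SimpleGraph V) (hG : G.Connected) (u v : V)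
    (he : G.Adj u v) :
    ddChrom (contractPair G u v) ≤ ddChrom G + 1 := by
  classical
  by_cases h : {n : ℕ | ∃ c : V → Fin n, IsDomColoring G c}.Nonempty
  · have hmem : ddChrom G ∈ {n : ℕ | ∃ c : V → Fin n, IsDomColoring G c} := Nat.sInf_mem h
    obtain ⟨c, hc⟩ := hmem
    obtain ⟨c', hc'⟩ := liftDomColoring G u v he (ddChrom G) c hc
    have : ddChrom G + 1 ∈
        {n : ℕ | ∃ c : {w : V // w ≠ v} → Fin n, IsDomColoring (contractPair G u v) c} :=
      ⟨c', hc'⟩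
    exact Nat.sInf_le this
  · have hSempty : {n : ℕ | ∃ c' : {w : V // w ≠ v} → Fin n,
        IsDomColoring (contractPair G u v) c'} = ∅ := by
      rw [Set.eq_empty_iff_forall_notMem]
      rintro n ⟨c, hc⟩
      obtain ⟨f, hf⟩ := unliftDomColoring G u v he n c hc
      exact h ⟨2*n+2, f, hf⟩
    have h0 : ddChrom (contractPair G u v) = 0 := by
      unfold ddChrom
      rw [hSempty, Nat.sInf_empty]
    omega
end

section
/- Let G be a finite simple connected graph and u, v two non-adjacent vertices of G. Then χ_dd(G ∘ {u,v}) ≤ χ_dd(G) + 1, where G ∘ {u,v} is obtained by identifying u and v into a single vertex. -/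
lemma contractPair_adj {V : Type*} (G : SimpleGraph V) (u v : V) (a b : {w : V // w ≠ v}) :
    (contractPair G u v).Adj a b ↔ (a : V) ≠ (b : V) ∧
    (G.Adj a b ∨ ((a : V) = u ∧ G.Adj v b) ∨ ((b : V) = u ∧ G.Adj v a)) := Iff.rfl

lemma forward {V : Type*} (G : SimpleGraph V) {u v : V} (huv : u ≠ v) (hna : ¬ G.Adj u v)
    {n : ℕ} (c : V → Fin n) (hc : IsDomColoring G c) :
    ∃ c' : {w : V // w ≠ v} → Fin (n + 1), IsDomColoring (contractPair G u v) c' := by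
  classical
  obtain ⟨hp, hd, hcd⟩ := hc
  set x : {w : V // w ≠ v} := ⟨u, huv⟩ with hx
  set c' : {w : V // w ≠ v} → Fin (n + 1) :=
    fun a => if (a : V) = u then Fin.last n else (c a).castSucc with hc'
  have hval : ∀ a : {w : V // w ≠ v},
      c' a = if (a : V) = u then Fin.last n else (c a).castSucc := fun a => rfl
  refine ⟨c', ?_, ?_, ?_⟩
  · -- proper
    intro a b hab
    rw [hval a, hval b]
    obtain ⟨hne, hadj⟩ := hab
    by_cases ha : (a : V) = u <;> by_cases hb : (b : V) = u
    · exact absurd (ha.trans hb.symm) hne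
    · rw [if_pos ha, if_neg hb]
      exact fun h => (Fin.castSucc_lt_last (c b)).ne h.symm
    · rw [if_neg ha, if_pos hb]
      exact fun h => (Fin.castSucc_lt_last (c a)).ne h
    · rw [if_neg ha, if_neg hb]
      have hGab : G.Adj (a : V) (b : V) := by
        rcases hadj with h | ⟨h, _⟩ | ⟨h, _⟩
        · exact h
        · exact absurd h ha
        · exact absurd h hb
      intro h
      exact hp _ _ hGab (Fin.castSucc_injective n h)
  · -- every vertex dominates a class
    intro a
    by_cases ha : (a : V) = u
    · refine ⟨Fin.last n, ⟨x, by rw [hval]; simp [hx]⟩, ?_⟩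
      intro b hb
      rw [hval b] at hb
      left
      by_cases hbu : (b : V) = u
      · exact Subtype.ext (hbu.trans ha.symm)
      · rw [if_neg hbu] at hb
        exact absurd hb (Fin.castSucc_lt_last (c b)).ne
    · obtain ⟨i, ⟨y0, hy0⟩, hdom⟩ := hd (a : V)
      by_cases hcase : ∃ b : {w : V // w ≠ v}, (b : V) ≠ u ∧ c (b : V) = i
      · obtain ⟨b, hbu, hbc⟩ := hcase
        refine ⟨(i).castSucc, ⟨b, by rw [hval, if_neg hbu, hbc]⟩, ?_⟩
        intro b' hb'
        rw [hval b'] at hb'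
        by_cases hb'u : (b' : V) = u
        · rw [if_pos hb'u] at hb'
          exact absurd hb'.symm (Fin.castSucc_lt_last i).ne
        · rw [if_neg hb'u] at hb'
          have : c (b' : V) = i := Fin.castSucc_injective n hb'
          rcases hdom _ this with h | h
          · exact Or.inl (Subtype.ext h)
          · exact Or.inr ⟨G.ne_of_adj h, Or.inl h⟩
      · -- every vertex of color i is u or v
        have hy0uv : y0 = u ∨ y0 = v := by
          by_contra hcon
          push_neg at hcon
          exact hcase ⟨⟨y0, hcon.2⟩, hcon.1, hy0⟩
        have hGa : G.Adj (a : V) y0 := by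
          rcases hdom y0 hy0 with h | h
          · exfalso
            rcases hy0uv with rfl | rfl
            · exact ha h.symm
            · exact a.2 h.symm
          · exact h
        refine ⟨Fin.last n, ⟨x, by rw [hval]; simp [hx]⟩, ?_⟩
        intro b hb
        rw [hval b] at hb
        have hbx : b = x := by
          by_cases hbu : (b : V) = u
          · exact Subtype.ext hbu
          · rw [if_neg hbu] at hb
            exact absurd hb (Fin.castSucc_lt_last (c b)).ne
        subst hbx
        right
        refine ⟨fun h => ha h, ?_⟩
        rcases hy0uv with rfl | rfl
        · exact Or.inl hGa
        · exact Or.inr (Or.inr ⟨rfl, hGa.symm⟩)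
  · -- class domination
    intro j hj
    by_cases hjl : j = Fin.last n
    · subst hjl
      refine ⟨x, ?_⟩
      intro b hb
      rw [hval b] at hb
      left
      by_cases hbu : (b : V) = u
      · exact Subtype.ext hbu
      · rw [if_neg hbu] at hb
        exact absurd hb (Fin.castSucc_lt_last (c b)).ne
    · obtain ⟨i, rfl⟩ := Fin.exists_castSucc_eq.mpr hjl
      obtain ⟨b, hb⟩ := hj
      rw [hval b] at hb
      have hbu : (b : V) ≠ u := by
        intro h
        rw [if_pos h] at hb
        exact (Fin.castSucc_lt_last i).ne hb.symm
      rw [if_neg hbu] at hb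
      have hbc : c (b : V) = i := Fin.castSucc_injective n hb
      obtain ⟨z, hz⟩ := hcd i ⟨b, hbc⟩
      by_cases hzu : z = u
      · refine ⟨x, ?_⟩
        intro b' hb'
        rw [hval b'] at hb'
        have hb'u : (b' : V) ≠ u := by
          intro h
          rw [if_pos h] at hb'
          exact (Fin.castSucc_lt_last i).ne hb'.symm
        rw [if_neg hb'u] at hb'
        have : c (b' : V) = i := Fin.castSucc_injective n hb'
        subst hzu
        rcases hz _ this with h | h
        · exact absurd h hb'u
        · exact Or.inr ⟨G.ne_of_adj h, Or.inl h⟩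
      · by_cases hzv : z = v
        · refine ⟨x, ?_⟩
          intro b' hb'
          rw [hval b'] at hb'
          have hb'u : (b' : V) ≠ u := by
            intro h
            rw [if_pos h] at hb'
            exact (Fin.castSucc_lt_last i).ne hb'.symm
          rw [if_neg hb'u] at hb'
          have : c (b' : V) = i := Fin.castSucc_injective n hb'
          rcases hz _ this with h | h
          · exact absurd (h.trans hzv) b'.2
          · subst hzv
            exact Or.inr ⟨fun he => hb'u he.symm, Or.inr (Or.inl ⟨rfl, h⟩)⟩
        · refine ⟨⟨z, hzv⟩, ?_⟩
          intro b' hb'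
          rw [hval b'] at hb'
          have hb'u : (b' : V) ≠ u := by
            intro h
            rw [if_pos h] at hb'
            exact (Fin.castSucc_lt_last i).ne hb'.symm
          rw [if_neg hb'u] at hb'
          have : c (b' : V) = i := Fin.castSucc_injective n hb'
          rcases hz _ this with h | h
          · exact Or.inl (Subtype.ext h)
          · exact Or.inr ⟨G.ne_of_adj h, Or.inl h⟩

set_option maxHeartbeats 2000000 in
lemma backward {V : Type*} (G : SimpleGraph V) {u v : V} (huv : u ≠ v) (hna : ¬ G.Adj u v)
    {m : ℕ} (c : {w : V // w ≠ v} → Fin m) (hc : IsDomColoring (contractPair G u v) c) :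
    ∃ c' : V → Fin (2 * m + 2), IsDomColoring G c' := by
  classical
  obtain ⟨hp, hd, hcd⟩ := hc
  set X : {w : V // w ≠ v} := ⟨u, huv⟩ with hX
  have hm : 0 < m := Nat.lt_of_le_of_lt (Nat.zero_le _) (c X).isLt
  obtain ⟨c', hval_u, hval_v, hval_o⟩ :
      ∃ c' : V → Fin (2 * m + 2), (c' u).val = 2 * m ∧ (c' v).val = 2 * m + 1 ∧
        ∀ (y : V) (hy : y ≠ v), y ≠ u →
          (c' y).val = 2 * (c ⟨y, hy⟩).val + (if G.Adj u y then 0 else 1) := by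
    refine ⟨fun y =>
      if hy : y = v then ⟨2 * m + 1, by omega⟩
      else if y = u then ⟨2 * m, by omega⟩
      else ⟨2 * (c ⟨y, hy⟩).val + (if G.Adj u y then 0 else 1),
        by have := (c ⟨y, hy⟩).isLt; split <;> omega⟩, ?_, ?_, ?_⟩
    · dsimp only
      rw [dif_neg huv, if_pos rfl]
    · dsimp only
      rw [dif_pos rfl]
    · intro y hy hyu
      dsimp only
      rw [dif_neg hy, if_neg hyu]
  have hmem : ∀ (z : V) (i : Fin m) (β : ℕ), β ≤ 1 → (c' z).val = 2 * i.val + β →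
      ∃ hz : z ≠ v, z ≠ u ∧ c ⟨z, hz⟩ = i ∧ (if G.Adj u z then 0 else 1) = β := by
    intro z i β hβ hz
    have hilt := i.isLt
    have hzu : z ≠ u := by rintro rfl; rw [hval_u] at hz; omega
    have hzv : z ≠ v := by rintro rfl; rw [hval_v] at hz; omega
    rw [hval_o z hzv hzu] at hz
    have hb : (if G.Adj u z then 0 else 1) ≤ 1 := by split <;> omega
    have h1 : (c ⟨z, hzv⟩).val = i.val := by omega
    exact ⟨hzv, hzu, Fin.ext h1, by omega⟩
  refine ⟨c', ?_, ?_, ?_⟩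
  · -- proper
    intro a b hab hEq
    have hEqv := congrArg Fin.val hEq
    have hne : a ≠ b := G.ne_of_adj hab
    by_cases hav : a = v <;> by_cases hbv : b = v
    · exact hne (hav.trans hbv.symm)
    · by_cases hbu : b = u
      · subst hav; subst hbu; exact hna hab.symm
      · rw [hav, hval_v] at hEqv
        rw [hval_o b hbv hbu] at hEqv
        have := (c ⟨b, hbv⟩).isLt
        have hb : (if G.Adj u b then 0 else 1) ≤ 1 := by split <;> omega
        omega
    · by_cases hau : a = u
      · subst hbv; subst hau; exact hna hab
      · rw [hbv, hval_v] at hEqv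
        rw [hval_o a hav hau] at hEqv
        have := (c ⟨a, hav⟩).isLt
        have hb : (if G.Adj u a then 0 else 1) ≤ 1 := by split <;> omega
        omega
    · by_cases hau : a = u <;> by_cases hbu : b = u
      · exact hne (hau.trans hbu.symm)
      · rw [hau, hval_u] at hEqv
        rw [hval_o b hbv hbu] at hEqv
        have := (c ⟨b, hbv⟩).isLt
        have hb : (if G.Adj u b then 0 else 1) ≤ 1 := by split <;> omega
        omega
      · rw [hbu, hval_u] at hEqv
        rw [hval_o a hav hau] at hEqv
        have := (c ⟨a, hav⟩).isLt
        have hb : (if G.Adj u a then 0 else 1) ≤ 1 := by split <;> omega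
        omega
      · rw [hval_o a hav hau, hval_o b hbv hbu] at hEqv
        have hba : (if G.Adj u a then 0 else 1) ≤ 1 := by split <;> omega
        have hbb : (if G.Adj u b then 0 else 1) ≤ 1 := by split <;> omega
        have hcc : (c ⟨a, hav⟩).val = (c ⟨b, hbv⟩).val := by omega
        have hadj' : (contractPair G u v).Adj ⟨a, hav⟩ ⟨b, hbv⟩ :=
          ⟨hne, Or.inl hab⟩
        exact hp _ _ hadj' (Fin.ext hcc)
  · -- vertex domination
    intro w
    have honly_u : ∀ z : V, c' z = ⟨2 * m, by omega⟩ → z = u := by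
      intro z hz
      have hzv : (c' z).val = 2 * m := by rw [hz]
      by_contra hzu
      by_cases hzvv : z = v
      · rw [hzvv, hval_v] at hzv; omega
      · rw [hval_o z hzvv hzu] at hzv
        have := (c ⟨z, hzvv⟩).isLt
        have hb : (if G.Adj u z then 0 else 1) ≤ 1 := by split <;> omega
        omega
    have honly_v : ∀ z : V, c' z = ⟨2 * m + 1, by omega⟩ → z = v := by
      intro z hz
      have hzv : (c' z).val = 2 * m + 1 := by rw [hz]
      by_contra hzvv
      by_cases hzu : z = u
      · rw [hzu, hval_u] at hzv; omega
      · rw [hval_o z hzvv hzu] at hzv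
        have := (c ⟨z, hzvv⟩).isLt
        have hb : (if G.Adj u z then 0 else 1) ≤ 1 := by split <;> omega
        omega
    have hcu : c' u = ⟨2 * m, by omega⟩ := Fin.ext hval_u
    have hcv : c' v = ⟨2 * m + 1, by omega⟩ := Fin.ext hval_v
    by_cases hwu : w = u
    · exact ⟨⟨2 * m, by omega⟩, ⟨u, hcu⟩, fun z hz => Or.inl ((honly_u z hz).trans hwu.symm)⟩
    · by_cases hwv : w = v
      · exact ⟨⟨2 * m + 1, by omega⟩, ⟨v, hcv⟩,
          fun z hz => Or.inl ((honly_v z hz).trans hwv.symm)⟩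
      · obtain ⟨i, ⟨y, hy⟩, hdom⟩ := hd ⟨w, hwv⟩
        by_cases hcase : ∃ y' : {z : V // z ≠ v}, (y' : V) ≠ u ∧ c y' = i
        · obtain ⟨⟨y'', hy''v⟩, hy'u, hy'c⟩ := hcase
          refine ⟨⟨2 * i.val + (if G.Adj u y'' then 0 else 1),
            by have := i.isLt; split <;> omega⟩, ⟨y'', ?_⟩, ?_⟩
          · have h1 := hval_o y'' hy''v hy'u
            rw [hy'c] at h1
            exact Fin.ext h1
          · intro z hz
            have hzv : (c' z).val = 2 * i.val + (if G.Adj u y'' then 0 else 1) := by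
              rw [hz]
            obtain ⟨hz1, hz2, hz3, _⟩ := hmem z i _ (by split <;> omega) hzv
            rcases hdom ⟨z, hz1⟩ hz3 with h | h
            · exact Or.inl (congrArg Subtype.val h)
            · obtain ⟨hne', hadj'⟩ := h
              rcases hadj' with h' | ⟨h', _⟩ | ⟨h', _⟩
              · exact Or.inr h'
              · exact absurd h' hwu
              · exact absurd h' hz2
        · -- the class i consists only of the merged vertex X
          have hyX : y = X := by
            by_contra hyX
            refine hcase ⟨y, ?_, hy⟩
            intro h
            exact hyX (Subtype.ext h)
          subst hyX
          rcases hdom X hy with h | h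
          · exact absurd (congrArg Subtype.val h).symm hwu
          · obtain ⟨hne', hadj'⟩ := h
            rcases hadj' with h' | ⟨h', _⟩ | ⟨_, h'⟩
            · -- G.Adj w u
              exact ⟨⟨2 * m, by omega⟩, ⟨u, hcu⟩,
                fun z hz => Or.inr ((honly_u z hz) ▸ h')⟩
            · exact absurd h' hwu
            · -- G.Adj v w
              exact ⟨⟨2 * m + 1, by omega⟩, ⟨v, hcv⟩,
                fun z hz => Or.inr ((honly_v z hz) ▸ h'.symm)⟩
  · -- class domination
    intro j hj
    obtain ⟨y, hy⟩ := hj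
    have honly_u : ∀ z : V, (c' z).val = 2 * m → z = u := by
      intro z hzv
      by_contra hzu
      by_cases hzvv : z = v
      · rw [hzvv, hval_v] at hzv; omega
      · rw [hval_o z hzvv hzu] at hzv
        have := (c ⟨z, hzvv⟩).isLt
        have hb : (if G.Adj u z then 0 else 1) ≤ 1 := by split <;> omega
        omega
    have honly_v : ∀ z : V, (c' z).val = 2 * m + 1 → z = v := by
      intro z hzv
      by_contra hzvv
      by_cases hzu : z = u
      · rw [hzu, hval_u] at hzv; omega
      · rw [hval_o z hzvv hzu] at hzv
        have := (c ⟨z, hzvv⟩).isLt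
        have hb : (if G.Adj u z then 0 else 1) ≤ 1 := by split <;> omega
        omega
    by_cases hyv : y = v
    · subst hyv
      refine ⟨y, fun z hz => Or.inl ?_⟩
      have : (c' z).val = (c' y).val := congrArg Fin.val (hz.trans hy.symm)
      rw [hval_v] at this
      exact honly_v z this
    · by_cases hyu : y = u
      · subst hyu
        refine ⟨y, fun z hz => Or.inl ?_⟩
        have : (c' z).val = (c' y).val := congrArg Fin.val (hz.trans hy.symm)
        rw [hval_u] at this
        exact honly_u z this
      · set i : Fin m := c ⟨y, hyv⟩ with hi
        have hjval : j.val = 2 * i.val + (if G.Adj u y then 0 else 1) := by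
          rw [← hy, hval_o y hyv hyu]
        by_cases hadjuy : G.Adj u y
        · -- bit 0 : every member is adjacent to u
          refine ⟨u, fun z hz => ?_⟩
          have hzv : (c' z).val = 2 * i.val + 0 := by
            rw [congrArg Fin.val hz, hjval, if_pos hadjuy]
          obtain ⟨hz1, hz2, _, hz4⟩ := hmem z i 0 (by omega) hzv
          by_cases hA : G.Adj u z
          · exact Or.inr hA
          · rw [if_neg hA] at hz4; omega
        · -- bit 1
          obtain ⟨Z, hZ⟩ := hcd i ⟨⟨y, hyv⟩, rfl⟩
          by_cases hZu : (Z : V) = u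
          · refine ⟨v, fun z hz => ?_⟩
            have hzv : (c' z).val = 2 * i.val + 1 := by
              rw [congrArg Fin.val hz, hjval, if_neg hadjuy]
            obtain ⟨hz1, hz2, hz3, hz4⟩ := hmem z i 1 (by omega) hzv
            have hAz : ¬ G.Adj u z := by
              intro hA; rw [if_pos hA] at hz4; omega
            rcases hZ ⟨z, hz1⟩ hz3 with h | h
            · exact absurd ((congrArg Subtype.val h).trans hZu) hz2
            · obtain ⟨hne', hadj'⟩ := h
              rcases hadj' with h' | ⟨_, h'⟩ | ⟨h', _⟩
              · exact absurd (hZu ▸ h') hAz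
              · exact Or.inr h'
              · exact absurd h' hz2
          · refine ⟨(Z : V), fun z hz => ?_⟩
            have hzv : (c' z).val = 2 * i.val + 1 := by
              rw [congrArg Fin.val hz, hjval, if_neg hadjuy]
            obtain ⟨hz1, hz2, hz3, _⟩ := hmem z i 1 (by omega) hzv
            rcases hZ ⟨z, hz1⟩ hz3 with h | h
            · exact Or.inl (congrArg Subtype.val h)
            · obtain ⟨hne', hadj'⟩ := h
              rcases hadj' with h' | ⟨h', _⟩ | ⟨h', _⟩
              · exact Or.inr h'
              · exact absurd h' hZu
              · exact absurd h' hz2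

/-- Vertex contraction, upper bound: identifying two non-adjacent vertices `u`, `v`
of a connected graph `G` gives `χ_dd(G ∘ {u,v}) ≤ χ_dd(G) + 1`. -/
theorem stmt6 {V : Type*} (G : SimpleGraph V) (hG : G.Connected) (u v : V)
    (huv : u ≠ v) (hna : ¬ G.Adj u v) :
    ddChrom (contractPair G u v) ≤ ddChrom G + 1 := by
  classical
  unfold ddChrom
  by_cases hA : {n : ℕ | ∃ c : V → Fin n, IsDomColoring G c}.Nonempty
  · obtain ⟨c, hc⟩ := Nat.sInf_mem hA
    obtain ⟨c', hc'⟩ := forward G huv hna c hc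
    exact Nat.sInf_le ⟨c', hc'⟩
  · have hB : {n : ℕ | ∃ c : {w : V // w ≠ v} → Fin n,
        IsDomColoring (contractPair G u v) c} = ∅ := by
      rw [Set.eq_empty_iff_forall_notMem]
      rintro n ⟨c, hc⟩
      obtain ⟨c', hc'⟩ := backward G huv hna c hc
      exact hA ⟨2 * n + 2, c', hc'⟩
    rw [hB, Nat.sInf_empty]
    exact Nat.zero_le _
end

section
/- Let G be a finite simple connected graph with m edges and k ≥ 2 an integer. Then χ_dd(S_k(G)) ≤ (m-1)·χ_dd(P_k) + χ_dd(P_{k+1}), where S_k(G) is the k-subdivision of G and P_n denotes the path on n vertices. -/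
/-- The `k`-subdivision of `G`: each edge is replaced by a path of length `k`
(with `k - 1` internal vertices). -/
def subdiv {V : Type*} (G : SimpleGraph V) (k : ℕ) :
    SimpleGraph (V ⊕ G.edgeSet × Fin (k - 1)) where
  Adj x y :=
    match x, y with
    | Sum.inl _, Sum.inl _ => False
    | Sum.inl u, Sum.inr (e, i) =>
        (i.val = 0 ∧ u = (Quot.out (e : Sym2 V)).1) ∨
        (i.val = k - 2 ∧ u = (Quot.out (e : Sym2 V)).2)
    | Sum.inr (e, i), Sum.inl u =>
        (i.val = 0 ∧ u = (Quot.out (e : Sym2 V)).1) ∨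
        (i.val = k - 2 ∧ u = (Quot.out (e : Sym2 V)).2)
    | Sum.inr (e, i), Sum.inr (f, j) => e = f ∧ (i.val + 1 = j.val ∨ j.val + 1 = i.val)
  symm := by
    constructor
    rintro (u | ⟨e, i⟩) (v | ⟨f, j⟩) h
    · exact h
    · exact h
    · exact h
    · exact ⟨h.1.symm, h.2.symm⟩
  loopless := by
    constructor
    rintro (u | ⟨e, i⟩) h
    · exact h
    · rcases h.2 with h' | h' <;> omega

section auxiliaryDomColoring

open SimpleGraph

lemma path_id_dc (n : ℕ) : ∃ c : Fin n → Fin n, IsDomColoring (SimpleGraph.pathGraph n) c :=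
  ⟨id, fun _ _ h => h.ne, fun v => ⟨v, ⟨v, rfl⟩, fun _ hu => Or.inl hu⟩,
    fun i _ => ⟨i, fun _ hu => Or.inl hu⟩⟩

lemma ddChrom_spec {V : Type*} (G : SimpleGraph V)
    (h : ∃ n, ∃ c : V → Fin n, IsDomColoring G c) :
    ∃ c : V → Fin (ddChrom G), IsDomColoring G c :=
  Nat.sInf_mem h

lemma ddChrom_le {V : Type*} (G : SimpleGraph V) (N : ℕ)
    (h : ∃ c : V → Fin N, IsDomColoring G c) : ddChrom G ≤ N :=
  Nat.sInf_le h

lemma blocks_dc {W : Type*} (Gw : SimpleGraph W) {E : Type*} (sz nc ofs : E → ℕ) (N : ℕ)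
    (blk : W → E) (pos : W → ℕ)
    (hpos : ∀ w, pos w < sz (blk w))
    (hinj : ∀ w w', blk w = blk w' → pos w = pos w' → w = w')
    (hsurj : ∀ e x, x < sz e → ∃ w, blk w = e ∧ pos w = x)
    (hA : ∀ w w', Gw.Adj w w' → blk w = blk w' → pos w + 1 = pos w' ∨ pos w' + 1 = pos w)
    (hB : ∀ w w', blk w = blk w' → (pos w + 1 = pos w' ∨ pos w' + 1 = pos w) → Gw.Adj w w')
    (hsep : ∀ e e', e ≠ e' → ∀ x y, x < nc e → y < nc e' → ofs e + x ≠ ofs e' + y)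
    (hbnd : ∀ e, ofs e + nc e ≤ N)
    (hcol : ∀ e, ∃ c : Fin (sz e) → Fin (nc e), IsDomColoring (SimpleGraph.pathGraph (sz e)) c) :
    ∃ c : W → Fin N, IsDomColoring Gw c := by
  choose col hcol using hcol
  set cfn : ∀ (e : E) (x : ℕ), x < sz e → ℕ := fun e x hx => ofs e + (col e ⟨x, hx⟩).val with hcfn
  have K2 : ∀ {e e' : E} {x y : ℕ}, e = e' → x = y → ∀ (hx : x < sz e) (hy : y < sz e'),
      cfn e x hx = cfn e' y hy := by rintro e _ x _ rfl rfl hx hy; rfl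
  have K0 : ∀ (e : E) (x : ℕ) (hx : x < sz e) (e' : E) (y : ℕ) (hy : y < sz e'),
      cfn e x hx = cfn e' y hy → e = e' := by
    intro e x hx e' y hy h
    by_contra hne
    exact hsep e e' hne _ _ (col e ⟨x, hx⟩).isLt (col e' ⟨y, hy⟩).isLt h
  have K1 : ∀ (e : E) (x y : ℕ) (hx : x < sz e) (hy : y < sz e),
      cfn e x hx = cfn e y hy → col e ⟨x, hx⟩ = col e ⟨y, hy⟩ := by
    intro e x y hx hy h
    simp only [hcfn] at h
    exact Fin.ext (by omega)
  refine ⟨fun w => ⟨cfn (blk w) (pos w) (hpos w), by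
      have := (col (blk w) ⟨pos w, hpos w⟩).isLt; have := hbnd (blk w)
      simp only [hcfn]; omega⟩, ?_, ?_, ?_⟩
  · -- proper
    intro u v hadj h
    have hval : cfn (blk u) (pos u) (hpos u) = cfn (blk v) (pos v) (hpos v) :=
      congrArg Fin.val h
    have he : blk v = blk u := (K0 _ _ _ _ _ _ hval).symm
    have hval2 : cfn (blk u) (pos u) (hpos u) = cfn (blk u) (pos v) (he ▸ hpos v) :=
      hval.trans (K2 he rfl _ _)
    have hcole := K1 _ _ _ _ _ hval2
    have hΔ := hA u v hadj he.symm
    exact (hcol (blk u)).1 _ _ (pathGraph_adj.mpr (by simpa using hΔ)) hcole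
  · -- every vertex dominates a class
    intro w
    obtain ⟨i, ⟨u₁, hu₁⟩, hdom⟩ := (hcol (blk w)).2.1 ⟨pos w, hpos w⟩
    refine ⟨⟨ofs (blk w) + i.val, by have := i.isLt; have := hbnd (blk w); omega⟩, ?_, ?_⟩
    · obtain ⟨w₁, hb₁, hp₁⟩ := hsurj (blk w) u₁.val u₁.isLt
      refine ⟨w₁, Fin.ext ?_⟩
      show cfn (blk w₁) (pos w₁) (hpos w₁) = ofs (blk w) + i.val
      rw [K2 hb₁ hp₁ (hpos w₁) u₁.isLt]
      simp only [hcfn, Fin.eta, hu₁]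
    · intro w' hc'
      have hval : cfn (blk w') (pos w') (hpos w') = ofs (blk w) + i.val := congrArg Fin.val hc'
      have he : blk w' = blk w := by
        by_contra hne
        exact hsep _ _ hne _ _ (col (blk w') ⟨pos w', hpos w'⟩).isLt i.isLt hval
      have hval2 : cfn (blk w) (pos w') (he ▸ hpos w') = ofs (blk w) + i.val :=
        (K2 he rfl (hpos w') _).symm.trans hval
      have hcoli : col (blk w) ⟨pos w', he ▸ hpos w'⟩ = i := Fin.ext (by
        simp only [hcfn] at hval2; omega)
      rcases hdom _ hcoli with hx | hx
      · exact Or.inl (hinj w' w he (by simpa using congrArg Fin.val hx))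
      · exact Or.inr (hB w w' he.symm (by have := pathGraph_adj.mp hx; simp only [] at this; omega))
  · -- every class dominated
    rintro j ⟨w₀, hw₀⟩
    have hval0 : cfn (blk w₀) (pos w₀) (hpos w₀) = j.val := congrArg Fin.val hw₀
    set e := blk w₀ with hee
    set i := col e ⟨pos w₀, hpos w₀⟩ with hii
    obtain ⟨z, hz⟩ := (hcol e).2.2 i ⟨⟨pos w₀, hpos w₀⟩, rfl⟩
    obtain ⟨wz, hbz, hpz⟩ := hsurj e z.val z.isLt
    refine ⟨wz, fun w' hc' => ?_⟩
    have hval : cfn (blk w') (pos w') (hpos w') = j.val := congrArg Fin.val hc'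
    have hvv : cfn (blk w') (pos w') (hpos w') = ofs e + i.val := by
      rw [hval, ← hval0]
    have he' : blk w' = e := by
      by_contra hne
      exact hsep _ _ hne _ _ (col (blk w') ⟨pos w', hpos w'⟩).isLt i.isLt hvv
    have hval2 : cfn e (pos w') (he' ▸ hpos w') = ofs e + i.val :=
      (K2 he' rfl (hpos w') _).symm.trans hvv
    have hcoli : col e ⟨pos w', he' ▸ hpos w'⟩ = i := Fin.ext (by
      simp only [hcfn] at hval2; omega)
    rcases hz _ hcoli with hx | hx
    · have hv : pos w' = z.val := by simpa using congrArg Fin.val hx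
      exact Or.inl (hinj w' wz (he'.trans hbz.symm) (by omega))
    · refine Or.inr (hB wz w' (hbz.trans he'.symm) ?_)
      have := pathGraph_adj.mp hx
      simp only [] at this; omega

lemma path_dc_trunc (n t : ℕ) (hn : 1 ≤ n)
    (h : ∃ c : Fin (n+1) → Fin t, IsDomColoring (SimpleGraph.pathGraph (n+1)) c) :
    ∃ d : Fin n → Fin t, IsDomColoring (SimpleGraph.pathGraph n) d := by
  obtain ⟨c, hc1, hc2, hc3⟩ := h
  by_cases hA : ∃ j : Fin t, (∃ u : Fin (n+1), u.val < n ∧ c u = j) ∧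
      ∀ u : Fin (n+1), c u = j → u.val < n →
        (u.val = n - 1 ∨ u.val + 1 = n - 1 ∨ (n-1) + 1 = u.val)
  · obtain ⟨j₀, ⟨u₀, hu₀n, hu₀⟩, hj₀⟩ := hA
    refine ⟨fun v => c v.castSucc, ?_, ?_, ?_⟩
    · intro u v hadj
      exact hc1 _ _ (pathGraph_adj.mpr (by simpa using pathGraph_adj.mp hadj))
    · intro v
      by_cases hv : v.val = n - 1
      · refine ⟨j₀, ⟨⟨u₀.val, hu₀n⟩, ?_⟩, ?_⟩
        · show c (⟨u₀.val, hu₀n⟩ : Fin n).castSucc = j₀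
          have he : (⟨u₀.val, hu₀n⟩ : Fin n).castSucc = u₀ := Fin.ext rfl
          rw [he]; exact hu₀
        · intro u hu
          have h3 := hj₀ u.castSucc hu (by simpa using u.isLt)
          simp only [Fin.coe_castSucc] at h3
          rcases h3 with h3 | h3 | h3
          · exact Or.inl (Fin.ext (by omega))
          · exact Or.inr (pathGraph_adj.mpr (by omega))
          · exact Or.inr (pathGraph_adj.mpr (by omega))
      · have hvlt : v.val < n - 1 := by have := v.isLt; omega
        obtain ⟨j, ⟨u₁, hu₁⟩, hdom⟩ := hc2 v.castSucc
        have hmem : ∀ u : Fin (n+1), c u = j → u.val < n := by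
          intro u hu
          rcases hdom u hu with h' | h'
          · have := congrArg Fin.val h'; simp at this; omega
          · have := pathGraph_adj.mp h'; simp only [Fin.coe_castSucc] at this; omega
        refine ⟨j, ⟨⟨u₁.val, hmem u₁ hu₁⟩, ?_⟩, ?_⟩
        · show c (⟨u₁.val, hmem u₁ hu₁⟩ : Fin n).castSucc = j
          have he : (⟨u₁.val, hmem u₁ hu₁⟩ : Fin n).castSucc = u₁ := Fin.ext rfl
          rw [he]; exact hu₁
        · intro u hu
          rcases hdom u.castSucc hu with h' | h'
          · exact Or.inl (Fin.ext (by have := congrArg Fin.val h'; simpa using this))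
          · exact Or.inr (pathGraph_adj.mpr (by
              have := pathGraph_adj.mp h'; simpa using this))
    · rintro j ⟨u₁, hu₁⟩
      obtain ⟨w, hw⟩ := hc3 j ⟨u₁.castSucc, hu₁⟩
      by_cases hwn : w.val < n
      · refine ⟨⟨w.val, hwn⟩, fun u hu => ?_⟩
        rcases hw u.castSucc hu with h' | h'
        · exact Or.inl (Fin.ext (by have := congrArg Fin.val h'; simpa using this))
        · exact Or.inr (pathGraph_adj.mpr (by
            have := pathGraph_adj.mp h'; simpa using this))
      · have hwv : w.val = n := by have := w.isLt; omega
        refine ⟨⟨n-1, by omega⟩, fun u hu => ?_⟩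
        have huval : u.val = n - 1 := by
          rcases hw u.castSucc hu with h' | h'
          · have := congrArg Fin.val h'; simp at this; omega
          · have := pathGraph_adj.mp h'; simp only [Fin.coe_castSucc] at this
            have := u.isLt; omega
        exact Or.inl (Fin.ext (by simpa using huval))
  · -- case B
    have hn2 : 2 ≤ n := by
      by_contra hcon
      have hn1 : n = 1 := by omega
      subst hn1
      refine hA ⟨c ⟨0, by omega⟩, ⟨⟨0, by omega⟩, by simp, rfl⟩, ?_⟩
      intro u _ hu; left; omega
    obtain ⟨i, ⟨u₀, hu₀⟩, hdom⟩ := hc2 ⟨n-1, by omega⟩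
    have hall : ∀ u : Fin (n+1), c u = i → u.val = n := by
      intro u hu
      by_contra hlt
      have hultn : u.val < n := by have := u.isLt; omega
      refine hA ⟨i, ⟨u, hultn, hu⟩, ?_⟩
      intro u' hu' hu'n
      rcases hdom u' hu' with h' | h'
      · have := congrArg Fin.val h'; simp at this; omega
      · have := pathGraph_adj.mp h'; simp only [Fin.val_mk, Fin.coe_castSucc] at this; omega
    have hnoti : ∀ v : Fin n, v.val ≠ n - 1 → c v.castSucc ≠ i := by
      intro v hv hci
      have := hall _ hci; simp at this; have := v.isLt; omega
    refine ⟨fun v => if v.val = n - 1 then i else c v.castSucc, ?_, ?_, ?_⟩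
    · intro u v hadj
      have hΔ := pathGraph_adj.mp hadj
      by_cases hu : u.val = n-1 <;> by_cases hv : v.val = n-1
      · omega
      · simp only [if_pos hu, if_neg hv]
        exact fun hh => hnoti v hv hh.symm
      · simp only [if_neg hu, if_pos hv]
        exact hnoti u hu
      · simp only [if_neg hu, if_neg hv]
        exact hc1 _ _ (pathGraph_adj.mpr (by simpa using hΔ))
    · intro v
      by_cases hv : v.val = n - 1
      · refine ⟨i, ⟨v, if_pos hv⟩, ?_⟩
        intro u hu
        have huv : u.val = n - 1 := by
          by_contra hc'
          simp only [Fin.val_mk, if_neg hc'] at hu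
          exact hnoti u hc' hu
        exact Or.inl (Fin.ext (by omega))
      · by_cases hv2 : v.val = n - 2
        · refine ⟨i, ⟨⟨n-1, by omega⟩, by simp⟩, ?_⟩
          intro u hu
          have huv : u.val = n - 1 := by
            by_contra hc'
            simp only [Fin.val_mk, if_neg hc'] at hu
            exact hnoti u hc' hu
          exact Or.inr (pathGraph_adj.mpr (by omega))
        · have hvlt : v.val < n - 2 := by have := v.isLt; omega
          obtain ⟨j, ⟨u₁, hu₁⟩, hdom'⟩ := hc2 v.castSucc
          have hmem : ∀ u : Fin (n+1), c u = j → u.val ≤ v.val + 1 := by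
            intro u hu
            rcases hdom' u hu with h' | h'
            · have := congrArg Fin.val h'; simp at this; omega
            · have := pathGraph_adj.mp h'; simp only [Fin.coe_castSucc] at this; omega
          have hji : j ≠ i := by
            intro hji
            have := hall u₁ (hji ▸ hu₁)
            have := hmem u₁ hu₁
            omega
          have hu₁n : u₁.val < n := by have := hmem u₁ hu₁; omega
          refine ⟨j, ⟨⟨u₁.val, hu₁n⟩, ?_⟩, ?_⟩
          · show (if (⟨u₁.val, hu₁n⟩ : Fin n).val = n - 1 then i else c (⟨u₁.val, hu₁n⟩ : Fin n).castSucc) = j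
            rw [if_neg (show ¬(⟨u₁.val, hu₁n⟩ : Fin n).val = n - 1 by simp only [Fin.val_mk]; have := hmem u₁ hu₁; omega)]
            have he : (⟨u₁.val, hu₁n⟩ : Fin n).castSucc = u₁ := Fin.ext rfl
            rw [he]; exact hu₁
          · intro u hu
            have hun : u.val ≠ n - 1 := by
              intro hc'
              simp only [Fin.val_mk, if_pos hc'] at hu
              exact hji hu.symm
            simp only [Fin.val_mk, if_neg hun] at hu
            rcases hdom' u.castSucc hu with h' | h'
            · exact Or.inl (Fin.ext (by have := congrArg Fin.val h'; simpa using this))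
            · exact Or.inr (pathGraph_adj.mpr (by
                have := pathGraph_adj.mp h'; simpa using this))
    · rintro j ⟨u₁, hu₁⟩
      by_cases hji : j = i
      · subst hji
        refine ⟨⟨n-1, by omega⟩, fun u hu => ?_⟩
        have huv : u.val = n - 1 := by
          by_contra hc'
          simp only [Fin.val_mk, if_neg hc'] at hu
          exact hnoti u hc' hu
        exact Or.inl (Fin.ext (by simpa using huv))
      · have hu₁n : u₁.val ≠ n - 1 := by
          intro hc'
          simp only [Fin.val_mk, if_pos hc'] at hu₁
          exact hji hu₁.symm
        simp only [Fin.val_mk, if_neg hu₁n] at hu₁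
        obtain ⟨w, hw⟩ := hc3 j ⟨u₁.castSucc, hu₁⟩
        by_cases hwn : w.val < n
        · refine ⟨⟨w.val, hwn⟩, fun u hu => ?_⟩
          have hun : u.val ≠ n - 1 := by
            intro hc'
            simp only [Fin.val_mk, if_pos hc'] at hu
            exact hji hu.symm
          simp only [Fin.val_mk, if_neg hun] at hu
          rcases hw u.castSucc hu with h' | h'
          · exact Or.inl (Fin.ext (by have := congrArg Fin.val h'; simpa using this))
          · exact Or.inr (pathGraph_adj.mpr (by
              have := pathGraph_adj.mp h'; simpa using this))
        · exfalso
          have hwv : w.val = n := by have := w.isLt; omega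
          rcases hw u₁.castSucc hu₁ with h' | h'
          · have := congrArg Fin.val h'; simp at this; have := u₁.isLt; omega
          · have := pathGraph_adj.mp h'; simp only [Fin.coe_castSucc] at this
            have := u₁.isLt; omega

section helpers
open SimpleGraph

variable {V : Type*} {G : SimpleGraph V}

lemma exists_closer (hG : G.Connected) (r v : V) (h : v ≠ r) :
    ∃ u, G.Adj v u ∧ G.dist r u + 1 = G.dist r v := by
  have hdvr : G.dist r v ≠ 0 := fun h0 => h (hG.dist_eq_zero_iff.mp h0).symm
  obtain ⟨pw, hpw⟩ := (hG.preconnected v r).exists_walk_length_eq_dist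
  cases pw with
  | nil => exact absurd rfl h
  | @cons _ u _ ha qw =>
    refine ⟨u, ha, ?_⟩
    have h1 : G.dist r u ≤ qw.length := by
      have := SimpleGraph.dist_le qw.reverse
      simpa using this
    have h2 : G.dist r v ≤ G.dist r u + G.dist u v := hG.dist_triangle
    have h3 : G.dist u v = 1 := SimpleGraph.dist_eq_one_iff_adj.mpr ha.symm
    have h4 : qw.length + 1 = G.dist v r := by simpa using hpw
    have h5 : G.dist v r = G.dist r v := SimpleGraph.dist_comm
    omega
end helpers

end auxiliaryDomColoring

/-- Subdivision, upper bound: if `G` is connected with `m` edges and `k ≥ 2`, then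
`χ_dd(S_k(G)) ≤ (m - 1) · χ_dd(P_k) + χ_dd(P_{k+1})`. -/
theorem stmt9 {V : Type*} (G : SimpleGraph V) (hG : G.Connected)
    [Fintype G.edgeSet] (m : ℕ) (hm : Fintype.card G.edgeSet = m)
    (k : ℕ) (hk : 2 ≤ k) :
    ddChrom (subdiv G k) ≤
      (m - 1) * ddChrom (SimpleGraph.pathGraph k) + ddChrom (SimpleGraph.pathGraph (k + 1)) := by
  classical
  set p := ddChrom (SimpleGraph.pathGraph k) with hpdef
  set q := ddChrom (SimpleGraph.pathGraph (k+1)) with hqdef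
  obtain ⟨cp, hcp⟩ : ∃ c : Fin k → Fin p, IsDomColoring (SimpleGraph.pathGraph k) c :=
    ddChrom_spec _ ⟨k, path_id_dc k⟩
  obtain ⟨cq, hcq⟩ : ∃ c : Fin (k+1) → Fin q, IsDomColoring (SimpleGraph.pathGraph (k+1)) c :=
    ddChrom_spec _ ⟨k+1, path_id_dc (k+1)⟩
  obtain ⟨cr, hcr⟩ : ∃ c : Fin (k-1) → Fin p, IsDomColoring (SimpleGraph.pathGraph (k-1)) c := by
    refine path_dc_trunc (k-1) p (by omega) ?_
    have hkm : k - 1 + 1 = k := by omega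
    rw [hkm]; exact ⟨cp, hcp⟩
  rcases Nat.eq_zero_or_pos m with hm0 | hmpos
  · -- degenerate: no edges
    subst hm0
    have hE : IsEmpty G.edgeSet := Fintype.card_eq_zero_iff.mp hm
    have hq1 : 0 < q := (cq ⟨0, by omega⟩).pos.trans_le (by have := (cq ⟨0, by omega⟩).isLt; omega)
    have hVsub : ∀ a b : V, a = b := by
      intro a b
      obtain ⟨w⟩ := hG.preconnected a b
      cases w with
      | nil => rfl
      | cons ha _ => exact hE.elim ⟨_, G.mem_edgeSet.mpr ha⟩
    have hWsub : ∀ w w' : V ⊕ G.edgeSet × Fin (k-1), w = w' := by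
      rintro (a | ⟨e, i⟩) (b | ⟨f, j⟩)
      · exact congrArg Sum.inl (hVsub a b)
      · exact hE.elim f
      · exact hE.elim e
      · exact hE.elim e
    have hnadj : ∀ w w' : V ⊕ G.edgeSet × Fin (k-1), ¬ (subdiv G k).Adj w w' := by
      intro w w' ha
      exact (subdiv G k).loopless.irrefl w (by rwa [hWsub w' w] at ha)
    obtain ⟨v0⟩ : Nonempty V := hG.nonempty
    have : ddChrom (subdiv G k) ≤ q := by
      refine ddChrom_le _ q ⟨fun _ => ⟨0, hq1⟩, ?_, ?_, ?_⟩
      · intro u v ha; exact absurd ha (hnadj u v)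
      · intro v; exact ⟨⟨0, hq1⟩, ⟨v, rfl⟩, fun u _ => Or.inl (hWsub u v)⟩
      · intro i _; exact ⟨Sum.inl v0, fun u _ => Or.inl (hWsub u _)⟩
    simpa using this
  · -- main case
    obtain ⟨e₀⟩ : Nonempty G.edgeSet := Fintype.card_pos_iff.mp (by omega)
    set fst : G.edgeSet → V := fun e => (Quot.out (e : Sym2 V)).1 with hfst
    set snd : G.edgeSet → V := fun e => (Quot.out (e : Sym2 V)).2 with hsnd
    have hout : ∀ e : G.edgeSet, (e : Sym2 V) = s(fst e, snd e) := by
      intro e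
      rw [hfst, hsnd]
      show _ = Sym2.mk _ _
      rw [Sym2.mk, Prod.mk.eta, Quot.out_eq]
    have hadj : ∀ e : G.edgeSet, G.Adj (fst e) (snd e) := by
      intro e
      have h2 := e.2
      rw [show (e : Sym2 V) ∈ G.edgeSet ↔ _ from Iff.rfl] at h2
      rw [hout e] at h2
      exact h2
    set r := fst e₀ with hr
    have hrb : r ≠ snd e₀ := (hadj e₀).ne
    -- the closer-neighbor function
    have hcl : ∀ v : V, v ≠ r → ∃ u, G.Adj v u ∧ G.dist r u + 1 = G.dist r v :=
      fun v hv => exists_closer hG r v hv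
    choose nb hnb1 hnb2 using hcl
    set g : V → G.edgeSet := fun v =>
      if hv : v = r then e₀ else ⟨s(v, nb v hv), (G.mem_edgeSet).mpr (hnb1 v hv)⟩ with hg
    have hgr : g r = e₀ := dif_pos rfl
    have hgval : ∀ v (hv : v ≠ r), (g v : Sym2 V) = s(v, nb v hv) := by
      intro v hv; rw [hg]; simp only [dif_neg hv]
    have hgend : ∀ v, v = fst (g v) ∨ v = snd (g v) := by
      intro v
      have hmem : v ∈ ((g v : G.edgeSet) : Sym2 V) := by
        by_cases hv : v = r
        · subst hv; rw [hgr, hout e₀]; exact Sym2.mem_mk_left _ _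
        · rw [hgval v hv]; exact Sym2.mem_mk_left _ _
      rw [hout (g v)] at hmem
      exact Sym2.mem_iff.mp hmem
    have huniq : ∀ v v' (hv : v ≠ r) (hv' : v' ≠ r), g v = g v' → v = v' := by
      intro v v' hv hv' hgg
      have hval : s(v, nb v hv) = s(v', nb v' hv') := by
        rw [← hgval v hv, ← hgval v' hv', hgg]
      rcases Sym2.eq_iff.mp hval with ⟨h1, _⟩ | ⟨h1, h2⟩
      · exact h1
      · have d1 := hnb2 v hv
        have d2 := hnb2 v' hv'
        rw [← h1] at d2
        rw [h2] at d1
        omega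
    have hsb : snd e₀ ≠ r := fun h => hrb h.symm
    have hgb : g (snd e₀) = e₀ := by
      have h1 : G.dist r (snd e₀) = 1 := SimpleGraph.dist_eq_one_iff_adj.mpr (hadj e₀)
      have h2 := hnb2 (snd e₀) hsb
      have h3 : nb (snd e₀) hsb = r := ((hG.dist_eq_zero_iff).mp (by omega)).symm
      apply Subtype.ext
      rw [hgval _ hsb, h3, Sym2.eq_swap, hout e₀]
    have hfib : ∀ v, g v = e₀ → v = r ∨ v = snd e₀ := by
      intro v hv
      by_cases hvr : v = r
      · exact Or.inl hvr
      · right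
        have hval : s(v, nb v hvr) = s(fst e₀, snd e₀) := by
          rw [← hgval v hvr, hv, hout e₀]
        rcases Sym2.eq_iff.mp hval with ⟨h1, _⟩ | ⟨h1, _⟩
        · exact absurd h1 hvr
        · exact h1
    set own : G.edgeSet → Prop := fun e => ∃ v, g v = e with hown
    have hownuniq : ∀ (e : G.edgeSet) (h : own e), e ≠ e₀ → ∀ v, g v = e → v = h.choose := by
      intro e h he v hv
      have hcs : g h.choose = e := h.choose_spec
      have hv1 : v ≠ r := fun hc => he (by rw [← hv, hc, hgr])
      have hv2 : h.choose ≠ r := fun hc => he (by rw [← hcs, hc, hgr])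
      exact huniq v h.choose hv1 hv2 (hv.trans hcs.symm)
    -- edge indexing
    set ι : G.edgeSet ≃ Fin m := Fintype.equivFinOfCardEq hm with hι
    set idxN : G.edgeSet → ℕ :=
      fun e => if (ι e).val < (ι e₀).val then (ι e).val else (ι e).val - 1 with hidxN
    have hιne : ∀ e, e ≠ e₀ → (ι e).val ≠ (ι e₀).val := by
      intro e he h
      exact he (ι.injective (Fin.ext h))
    have hidxlt : ∀ e, e ≠ e₀ → idxN e < m - 1 := by
      intro e he
      have h1 := hιne e he
      have h2 := (ι e).isLt
      have h3 := (ι e₀).isLt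
      rw [hidxN]; simp only []; split_ifs <;> omega
    have hidxinj : ∀ e e', e ≠ e₀ → e' ≠ e₀ → idxN e = idxN e' → e = e' := by
      intro e e' he he' h
      have h1 := hιne e he
      have h2 := hιne e' he'
      have h3 := (ι e).isLt
      have h4 := (ι e').isLt
      apply ι.injective
      apply Fin.ext
      rw [hidxN] at h
      simp only [] at h
      split_ifs at h <;> omega
    -- block data
    set sz : G.edgeSet → ℕ := fun e => if e = e₀ then k+1 else if own e then k else k-1 with hsz
    set nc : G.edgeSet → ℕ := fun e => if e = e₀ then q else p with hnc
    set ofs : G.edgeSet → ℕ := fun e => if e = e₀ then (m-1)*p else idxN e * p with hofs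
    set blk : V ⊕ G.edgeSet × Fin (k-1) → G.edgeSet := Sum.elim g Prod.fst with hblk
    set posl : V → ℕ := fun v =>
      if g v = e₀ then (if v = r then 0 else k)
      else (if v = fst (g v) then 0 else k - 1) with hposl
    set posr : G.edgeSet × Fin (k-1) → ℕ := fun ei =>
      if ei.1 = e₀ then ei.2.val + 1
      else if h : own ei.1 then (if h.choose = fst ei.1 then ei.2.val + 1 else ei.2.val)
      else ei.2.val with hposr
    set pos : V ⊕ G.edgeSet × Fin (k-1) → ℕ := Sum.elim posl posr with hpos
    have hWadj_inl_inr : ∀ (v : V) (e : G.edgeSet) (i : Fin (k-1)),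
        (subdiv G k).Adj (Sum.inl v) (Sum.inr (e, i)) ↔
          ((i.val = 0 ∧ v = fst e) ∨ (i.val = k-2 ∧ v = snd e)) := fun _ _ _ => Iff.rfl
    have hWadj_inr_inl : ∀ (v : V) (e : G.edgeSet) (i : Fin (k-1)),
        (subdiv G k).Adj (Sum.inr (e, i)) (Sum.inl v) ↔
          ((i.val = 0 ∧ v = fst e) ∨ (i.val = k-2 ∧ v = snd e)) := fun _ _ _ => Iff.rfl
    have hWadj_inr_inr : ∀ (e e' : G.edgeSet) (i i' : Fin (k-1)),
        (subdiv G k).Adj (Sum.inr (e, i)) (Sum.inr (e', i')) ↔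
          (e = e' ∧ (i.val + 1 = i'.val ∨ i'.val + 1 = i.val)) := fun _ _ _ _ => Iff.rfl
    have hWadj_inl_inl : ∀ (v v' : V), ¬ (subdiv G k).Adj (Sum.inl v) (Sum.inl v') :=
      fun _ _ h => h
    have hvnr : ∀ (v : V) (e : G.edgeSet), g v = e → e ≠ e₀ → v ≠ r := by
      intro v e hgv he hvr
      exact he (by rw [← hgv, hvr, hgr])
    have hax : ∀ (v : V) (e : G.edgeSet) (i : Fin (k-1)),
        ((i.val = 0 ∧ v = fst e) ∨ (i.val = k-2 ∧ v = snd e)) → g v = e →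
        (posl v + 1 = posr (e, i) ∨ posr (e, i) + 1 = posl v) := by
      intro v e i hd hgv
      rw [hposl, hposr]
      simp only [hgv]
      by_cases h0 : e = e₀
      · rw [if_pos h0, if_pos h0]
        rcases hd with ⟨hi0, hva⟩ | ⟨hik, hvb⟩
        · rw [if_pos (by rw [hva, h0, hr])]
          left; omega
        · rw [if_neg (by rw [hvb, h0]; exact hsb)]
          right; omega
      · have h1 : own e := ⟨v, hgv⟩
        have hch : v = h1.choose := hownuniq e h1 h0 v hgv
        rw [if_neg h0, if_neg h0, dif_pos h1]
        rcases hd with ⟨hi0, hva⟩ | ⟨hik, hvb⟩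
        · rw [if_pos (show Exists.choose h1 = fst e from hch ▸ hva), if_pos hva]
          left; omega
        · have hvnf : v ≠ fst e := by rw [hvb]; exact (hadj e).ne'
          rw [if_neg (show ¬Exists.choose h1 = fst e from fun hc => hvnf (hch.symm ▸ hc)),
            if_neg hvnf]
          right; omega
    have hbx : ∀ (v : V) (e : G.edgeSet) (i : Fin (k-1)), g v = e →
        (posl v + 1 = posr (e, i) ∨ posr (e, i) + 1 = posl v) →
        ((i.val = 0 ∧ v = fst e) ∨ (i.val = k-2 ∧ v = snd e)) := by
      intro v e i hgv hΔ
      rw [hposl, hposr] at hΔ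
      simp only [hgv] at hΔ
      have hilt := i.isLt
      by_cases h0 : e = e₀
      · rw [if_pos h0, if_pos h0] at hΔ
        rcases hfib v (by rw [hgv, h0]) with hv1 | hv1
        · rw [if_pos hv1] at hΔ
          exact Or.inl ⟨by omega, by rw [hv1, h0, hr]⟩
        · rw [if_neg (by rw [hv1]; exact hsb)] at hΔ
          exact Or.inr ⟨by omega, by rw [hv1, h0]⟩
      · have h1 : own e := ⟨v, hgv⟩
        have hch : v = h1.choose := hownuniq e h1 h0 v hgv
        rw [if_neg h0, if_neg h0, dif_pos h1] at hΔ
        by_cases hva : v = fst e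
        · rw [if_pos (show Exists.choose h1 = fst e from hch ▸ hva), if_pos hva] at hΔ
          exact Or.inl ⟨by omega, hva⟩
        · have hvb : v = snd e := by
            rcases hgend v with h' | h'
            · exact absurd (by rwa [hgv] at h') hva
            · rwa [hgv] at h'
          rw [if_neg (show ¬Exists.choose h1 = fst e from fun hc => hva (hch.symm ▸ hc)),
            if_neg hva] at hΔ
          exact Or.inr ⟨by omega, hvb⟩
    have hmain : ∃ c : (V ⊕ G.edgeSet × Fin (k-1)) → Fin ((m-1)*p + q),
        IsDomColoring (subdiv G k) c := by
      apply blocks_dc (subdiv G k) sz nc ofs ((m-1)*p + q) blk pos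
      · -- hpos
        rintro (v | ⟨e, i⟩)
        · simp only [hblk, hpos, Sum.elim_inl, hposl, hsz]
          by_cases h0 : g v = e₀
          · rw [if_pos h0, if_pos h0]; split_ifs <;> omega
          · rw [if_neg h0, if_neg h0, if_pos (⟨v, rfl⟩ : own (g v))]
            split_ifs <;> omega
        · simp only [hblk, hpos, Sum.elim_inr, hposr, hsz]
          have hi := i.isLt
          by_cases h0 : e = e₀
          · rw [if_pos h0, if_pos h0]; omega
          · rw [if_neg h0, if_neg h0]
            by_cases h1 : own e
            · rw [dif_pos h1, if_pos h1]; split_ifs <;> omega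
            · rw [dif_neg h1, if_neg h1]; omega
      · -- hinj
        rintro (v | ⟨e, i⟩) (v' | ⟨e', i'⟩) hb hpq
        · simp only [hblk, Sum.elim_inl] at hb
          simp only [hpos, Sum.elim_inl, hposl] at hpq
          by_cases hvv : v = v'
          · rw [hvv]
          · exfalso
            by_cases h0 : g v = e₀
            · have h0' : g v' = e₀ := by rw [← hb]; exact h0
              rw [if_pos h0, if_pos h0'] at hpq
              rcases hfib v h0 with h1 | h1 <;> rcases hfib v' h0' with h2 | h2
              · exact hvv (h1.trans h2.symm)
              · rw [if_pos h1, if_neg (by rw [h2]; exact hsb)] at hpq; omega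
              · rw [if_neg (by rw [h1]; exact hsb), if_pos h2] at hpq; omega
              · exact hvv (h1.trans h2.symm)
            · have h0' : g v' ≠ e₀ := by rw [← hb]; exact h0
              exact hvv (huniq v v' (hvnr v _ rfl h0) (hvnr v' _ rfl h0') hb)
        · exfalso
          simp only [hblk, Sum.elim_inl, Sum.elim_inr] at hb
          simp only [hpos, Sum.elim_inl, Sum.elim_inr, hposl, hposr] at hpq
          have hi := i'.isLt
          by_cases h0 : e' = e₀
          · rw [if_pos h0] at hpq
            rw [hb] at hpq
            rw [if_pos h0] at hpq
            rcases hfib v (by rw [hb, h0]) with h1 | h1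
            · rw [if_pos h1] at hpq; omega
            · rw [if_neg (by rw [h1]; exact hsb)] at hpq; omega
          · have h1 : own e' := ⟨v, hb⟩
            have hch : v = h1.choose := hownuniq e' h1 h0 v hb
            rw [if_neg h0, dif_pos h1, hb, if_neg h0] at hpq
            by_cases hva : v = fst e'
            · rw [if_pos (show Exists.choose h1 = fst e' from hch ▸ hva), if_pos hva] at hpq
              omega
            · rw [if_neg (show ¬Exists.choose h1 = fst e' from fun hc => hva (hch.symm ▸ hc)),
                if_neg hva] at hpq
              omega
        · exfalso
          simp only [hblk, Sum.elim_inl, Sum.elim_inr] at hb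
          simp only [hpos, Sum.elim_inl, Sum.elim_inr, hposl, hposr] at hpq
          have hi := i.isLt
          have hb' : g v' = e := hb.symm
          by_cases h0 : e = e₀
          · rw [if_pos h0] at hpq
            rw [hb', if_pos h0] at hpq
            rcases hfib v' (by rw [hb', h0]) with h1 | h1
            · rw [if_pos h1] at hpq; omega
            · rw [if_neg (by rw [h1]; exact hsb)] at hpq; omega
          · have h1 : own e := ⟨v', hb'⟩
            have hch : v' = h1.choose := hownuniq e h1 h0 v' hb'
            rw [if_neg h0, dif_pos h1, hb', if_neg h0] at hpq
            by_cases hva : v' = fst e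
            · rw [if_pos (show Exists.choose h1 = fst e from hch ▸ hva), if_pos hva] at hpq
              omega
            · rw [if_neg (show ¬Exists.choose h1 = fst e from fun hc => hva (hch.symm ▸ hc)),
                if_neg hva] at hpq
              omega
        · simp only [hblk, Sum.elim_inr] at hb
          subst hb
          simp only [hpos, Sum.elim_inr, hposr] at hpq
          have : i = i' := by
            apply Fin.ext
            split_ifs at hpq <;> omega
          rw [this]
      · -- hsurj
        intro e x hx
        rw [hsz] at hx
        simp only [] at hx
        by_cases h0 : e = e₀
        · subst h0
          rw [if_pos rfl] at hx
          by_cases hx0 : x = 0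
          · refine ⟨Sum.inl r, by simp only [hblk, Sum.elim_inl]; exact hgr, ?_⟩
            simp [hpos, hposl, hgr]
            omega
          · by_cases hxk : x = k
            · refine ⟨Sum.inl (snd e), by simp only [hblk, Sum.elim_inl]; exact hgb, ?_⟩
              simp only [hpos, Sum.elim_inl, hposl]
              rw [if_pos hgb, if_neg hsb]
              omega
            · refine ⟨Sum.inr (e, ⟨x-1, by omega⟩), by simp only [hblk, Sum.elim_inr], ?_⟩
              simp [hpos, hposr]
              omega
        · rw [if_neg h0] at hx
          by_cases h1 : own e
          · rw [if_pos h1] at hx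
            have hgv : g h1.choose = e := h1.choose_spec
            by_cases hva : h1.choose = fst e
            · by_cases hx0 : x = 0
              · refine ⟨Sum.inl h1.choose, by simp only [hblk, Sum.elim_inl]; exact hgv, ?_⟩
                simp only [hpos, Sum.elim_inl, hposl, hgv, if_neg h0, if_pos hva]
                omega
              · refine ⟨Sum.inr (e, ⟨x-1, by omega⟩), by simp only [hblk, Sum.elim_inr], ?_⟩
                simp only [hpos, Sum.elim_inr, hposr, if_neg h0, dif_pos h1, if_pos hva,
                  Fin.val_mk]
                omega
            · by_cases hxk : x = k - 1
              · refine ⟨Sum.inl h1.choose, by simp only [hblk, Sum.elim_inl]; exact hgv, ?_⟩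
                simp only [hpos, Sum.elim_inl, hposl, hgv, if_neg h0, if_neg hva]
                omega
              · refine ⟨Sum.inr (e, ⟨x, by omega⟩), by simp only [hblk, Sum.elim_inr], ?_⟩
                simp only [hpos, Sum.elim_inr, hposr, if_neg h0, dif_pos h1, if_neg hva,
                  Fin.val_mk]
          · rw [if_neg h1] at hx
            refine ⟨Sum.inr (e, ⟨x, hx⟩), by simp only [hblk, Sum.elim_inr], ?_⟩
            simp only [hpos, Sum.elim_inr, hposr, if_neg h0, dif_neg h1, Fin.val_mk]
      · -- hA
        rintro (v | ⟨e, i⟩) (v' | ⟨e', i'⟩) hadj' hb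
        · exact absurd hadj' (hWadj_inl_inl v v')
        · simp only [hblk, Sum.elim_inl, Sum.elim_inr] at hb
          simp only [hpos, Sum.elim_inl, Sum.elim_inr]
          exact hax v e' i' ((hWadj_inl_inr v e' i').mp hadj') hb
        · simp only [hblk, Sum.elim_inl, Sum.elim_inr] at hb
          simp only [hpos, Sum.elim_inl, Sum.elim_inr]
          exact (hax v' e i ((hWadj_inr_inl v' e i).mp hadj') hb.symm).symm
        · simp only [hblk, Sum.elim_inr] at hb
          subst hb
          obtain ⟨-, hΔ⟩ := (hWadj_inr_inr e e i i').mp hadj'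
          simp only [hpos, Sum.elim_inr, hposr]
          split_ifs <;> omega
      · -- hB
        rintro (v | ⟨e, i⟩) (v' | ⟨e', i'⟩) hb hΔ
        · exfalso
          simp only [hblk, Sum.elim_inl] at hb
          simp only [hpos, Sum.elim_inl, hposl] at hΔ
          by_cases h0 : g v = e₀
          · have h0' : g v' = e₀ := by rw [← hb]; exact h0
            rw [if_pos h0, if_pos h0'] at hΔ
            rcases hfib v h0 with h1 | h1 <;> rcases hfib v' h0' with h2 | h2
            · rw [if_pos h1, if_pos h2] at hΔ; omega
            · rw [if_pos h1, if_neg (show ¬(v' = r) by rw [h2]; exact hsb)] at hΔ; omega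
            · rw [if_neg (show ¬(v = r) by rw [h1]; exact hsb), if_pos h2] at hΔ; omega
            · rw [if_neg (show ¬(v = r) by rw [h1]; exact hsb),
                if_neg (show ¬(v' = r) by rw [h2]; exact hsb)] at hΔ
              omega
          · have h0' : g v' ≠ e₀ := by rw [← hb]; exact h0
            have := huniq v v' (hvnr v _ rfl h0) (hvnr v' _ rfl h0') hb
            subst this
            rw [if_neg h0] at hΔ
            split_ifs at hΔ <;> rcases hΔ with hΔ | hΔ <;> first | exact hΔ | omega
        · simp only [hblk, Sum.elim_inl, Sum.elim_inr] at hb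
          simp only [hpos, Sum.elim_inl, Sum.elim_inr] at hΔ
          exact (hWadj_inl_inr v e' i').mpr (hbx v e' i' hb hΔ)
        · simp only [hblk, Sum.elim_inl, Sum.elim_inr] at hb
          simp only [hpos, Sum.elim_inl, Sum.elim_inr] at hΔ
          exact (hWadj_inr_inl v' e i).mpr (hbx v' e i hb.symm hΔ.symm)
        · simp only [hblk, Sum.elim_inr] at hb
          subst hb
          simp only [hpos, Sum.elim_inr, hposr] at hΔ
          refine (hWadj_inr_inr e e i i').mpr ⟨rfl, ?_⟩
          split_ifs at hΔ <;> omega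
      · -- hsep
        intro e e' hee x y hx hy
        rw [hnc] at hx hy
        simp only [] at hx hy
        rw [hofs]
        simp only []
        by_cases h0 : e = e₀ <;> by_cases h1 : e' = e₀
        · exact absurd (h0.trans h1.symm) hee
        · rw [if_pos h0, if_neg h1]
          rw [if_neg h1] at hy
          have hl := hidxlt e' h1
          have h2 : (idxN e' + 1) * p ≤ (m-1) * p := mul_le_mul_left (by omega) p
          rw [Nat.succ_mul] at h2
          omega
        · rw [if_neg h0, if_pos h1]
          rw [if_neg h0] at hx
          have hl := hidxlt e h0
          have h2 : (idxN e + 1) * p ≤ (m-1) * p := mul_le_mul_left (by omega) p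
          rw [Nat.succ_mul] at h2
          omega
        · rw [if_neg h0, if_neg h1]
          rw [if_neg h0] at hx
          rw [if_neg h1] at hy
          have hne : idxN e ≠ idxN e' := fun h => hee (hidxinj e e' h0 h1 h)
          rcases Nat.lt_or_ge (idxN e) (idxN e') with hlt | hge
          · have h2 : (idxN e + 1) * p ≤ idxN e' * p := mul_le_mul_left (by omega) p
            rw [Nat.succ_mul] at h2
            omega
          · have hlt : idxN e' < idxN e := by omega
            have h2 : (idxN e' + 1) * p ≤ idxN e * p := mul_le_mul_left (by omega) p
            rw [Nat.succ_mul] at h2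
            omega
      · -- hbnd
        intro e
        rw [hofs, hnc]
        simp only []
        by_cases h0 : e = e₀
        · rw [if_pos h0, if_pos h0]
        · rw [if_neg h0, if_neg h0]
          have hl := hidxlt e h0
          have h2 : (idxN e + 1) * p ≤ (m-1) * p := mul_le_mul_left (by omega) p
          rw [Nat.succ_mul] at h2
          omega
      · -- hcol
        intro e
        by_cases h0 : e = e₀
        · rw [show sz e = k + 1 by rw [hsz]; simp [h0],
            show nc e = q by rw [hnc]; simp [h0]]
          exact ⟨cq, hcq⟩
        · by_cases h1 : own e
          · rw [show sz e = k by rw [hsz]; simp [h0, h1],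
              show nc e = p by rw [hnc]; simp [h0]]
            exact ⟨cp, hcp⟩
          · rw [show sz e = k - 1 by rw [hsz]; simp [h0, h1],
              show nc e = p by rw [hnc]; simp [h0]]
            exact ⟨cr, hcr⟩
    exact ddChrom_le _ _ hmain
end

section
/- Let G be a finite simple connected graph and C a cycle of length l in G. Let W⁺(G) be the graph obtained from G by adding a new vertex x adjacent to every vertex on C. Then χ_dd(W⁺(G)) ≤ χ_dd(G) + 1. -/
/-- Add a new vertex (`none`) adjacent to every vertex of the set `S`. -/
def addVertex {V : Type*} (G : SimpleGraph V) (S : Set V) : SimpleGraph (Option V) where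
  Adj x y :=
    match x, y with
    | some a, some b => G.Adj a b
    | some a, none => a ∈ S
    | none, some b => b ∈ S
    | none, none => False
  symm := by
    constructor
    rintro (_ | a) (_ | b) h
    · exact h
    · exact h
    · exact h
    · exact h.symm
  loopless := by
    constructor
    rintro (_ | a) h
    · exact h
    · exact G.loopless.irrefl a h

theorem extend_dom {V : Type*} (G : SimpleGraph V) (S : Set V) {n : ℕ} (c : V → Fin n)
    (hc : IsDomColoring G c) :
    ∃ c' : Option V → Fin (n + 1), IsDomColoring (addVertex G S) c' := by
  classical
  refine ⟨fun x => Option.rec (Fin.last n) (fun v => (c v).castSucc) x, ?_, ?_, ?_⟩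
  · rintro (_ | a) (_ | b) h
    · exact h.elim
    · exact (Fin.castSucc_lt_last (c b)).ne'
    · exact (Fin.castSucc_lt_last (c a)).ne
    · exact fun he => hc.1 a b h (Fin.castSucc_injective n he)
  · rintro (_ | v)
    · refine ⟨Fin.last n, ⟨none, rfl⟩, ?_⟩
      rintro (_ | u) h
      · exact Or.inl rfl
      · exact absurd h (Fin.castSucc_lt_last (c u)).ne
    · obtain ⟨i, ⟨u, hu⟩, hdom⟩ := hc.2.1 v
      refine ⟨i.castSucc, ⟨some u, by simpa using congrArg Fin.castSucc hu⟩, ?_⟩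
      rintro (_ | u') h
      · exact absurd h.symm (Fin.castSucc_lt_last i).ne
      · rcases hdom u' (Fin.castSucc_injective n h) with h' | h'
        · exact Or.inl (congrArg some h')
        · exact Or.inr h'
  · rintro i ⟨x, hx⟩
    by_cases hi : i = Fin.last n
    · refine ⟨none, ?_⟩
      rintro (_ | u) h
      · exact Or.inl rfl
      · exact absurd (h.trans hi) (Fin.castSucc_lt_last (c u)).ne
    · have hlt : i.val < n := by
        rcases Nat.lt_succ_iff_lt_or_eq.mp i.isLt with h | h
        · exact h
        · exact absurd (Fin.ext h) hi
      set j : Fin n := ⟨i.val, hlt⟩ with hj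
      have hji : j.castSucc = i := rfl
      rcases x with _ | u
      · exact absurd hx.symm hi
      · have hcu : c u = j := Fin.castSucc_injective n (by rw [hji]; exact hx)
        obtain ⟨v0, hdom⟩ := hc.2.2 j ⟨u, hcu⟩
        refine ⟨some v0, ?_⟩
        rintro (_ | u') h
        · exact absurd (hji ▸ h.symm : Fin.castSucc j = Fin.last n)
            (Fin.castSucc_lt_last j).ne
        · rcases hdom u' (Fin.castSucc_injective n (by rw [hji]; exact h)) with h' | h'
          · exact Or.inl (congrArg some h')
          · exact Or.inr h'

theorem restrict_dom {V : Type*} (G : SimpleGraph V) (L : List V) {n : ℕ}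
    (c : Option V → Fin n) (hc : IsDomColoring (addVertex G {x | x ∈ L}) c) :
    ∃ d : V → Fin (n + L.length), IsDomColoring G d := by
  classical
  set d : V → Fin (n + L.length) := fun v =>
    if h : v ∈ L then ⟨n + L.idxOf v, by
      have := List.idxOf_lt_length_iff.2 h; omega⟩
    else ⟨(c (some v)).val, by have := (c (some v)).isLt; omega⟩ with hd
  have hdin : ∀ a, a ∈ L → (d a).val = n + L.idxOf a := by
    intro a h; simp [hd, dif_pos h]
  have hdout : ∀ a, a ∉ L → (d a).val = (c (some a)).val := by
    intro a h; simp [hd, dif_neg h]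
  -- key: if d a = d b then a,b are "in the same regime"
  have keyin : ∀ a b, a ∈ L → d a = d b → a = b := by
    intro a b ha h
    by_cases hb : b ∈ L
    · have : n + L.idxOf a = n + L.idxOf b := by
        rw [← hdin a ha, ← hdin b hb, h]
      exact (List.idxOf_inj ha (y := b)).mp (by omega)
    · exfalso
      have h1 := hdin a ha
      have h2 := hdout b hb
      have := (c (some b)).isLt
      rw [h] at h1; omega
  have keyout : ∀ a b, a ∉ L → d a = d b → b ∉ L ∧ c (some a) = c (some b) := by
    intro a b ha h
    by_cases hb : b ∈ L
    · exact absurd (keyin b a hb h.symm) (fun e => ha (e ▸ hb))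
    · refine ⟨hb, Fin.ext ?_⟩
      rw [← hdout a ha, ← hdout b hb, h]
  refine ⟨d, ?_, ?_, ?_⟩
  · -- proper
    intro u v huv he
    by_cases hu : u ∈ L
    · exact G.ne_of_adj huv (keyin u v hu he)
    · have h2 := (keyout u v hu he).2
      exact hc.1 (some u) (some v) huv h2
  · -- every vertex dominates a class
    intro v
    by_cases hv : v ∈ L
    · exact ⟨d v, ⟨v, rfl⟩, fun u hu => Or.inl (keyin u v (by
        by_contra hu'
        have h1 := hdout u hu'
        have h2 := hdin v hv
        have := (c (some u)).isLt
        rw [hu] at h1; omega) hu)⟩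
    · obtain ⟨i, ⟨u0, hu0⟩, hdom⟩ := hc.2.1 (some v)
      rcases u0 with _ | u
      · rcases hdom none hu0 with h | h
        · exact absurd h (by simp)
        · exact absurd h hv
      · by_cases hu : u ∈ L
        · -- v dominates the singleton fresh class of u
          have hne' : u ≠ v := fun e => hv (e ▸ hu)
          have hcase : G.Adj v u := by
            rcases hdom (some u) hu0 with h | h
            · exact absurd (Option.some_injective V h) hne'
            · exact h
          refine ⟨d u, ⟨u, rfl⟩, ?_⟩
          intro u' h
          have : u' = u := keyin u' u (by
            by_contra hu'
            have h1 := hdout u' hu'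
            have h2 := hdin u hu
            have := (c (some u')).isLt
            rw [h] at h1; omega) h
          exact Or.inr (this ▸ hcase)
        · -- v dominates the old class of u
          refine ⟨d u, ⟨u, rfl⟩, ?_⟩
          intro u' h
          have h2 := (keyout u' u ?_ h).2
          · have : c (some u') = i := h2.symm ▸ hu0
            rcases hdom (some u') this with h' | h'
            · exact Or.inl (Option.some_injective V h')
            · exact Or.inr h'
          · by_contra hu'
            have h1 := hdin u' hu'
            have h2 := hdout u hu
            have := (c (some u)).isLt
            rw [h] at h1; omega
  · -- every nonempty class is dominated
    rintro i ⟨x, hx⟩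
    by_cases hi : i.val < n
    · have hxL : x ∉ L := by
        intro hxL
        have h1 := hdin x hxL
        rw [hx] at h1; omega
      have hcx : c (some x) = ⟨i.val, hi⟩ := Fin.ext (by
        have := hdout x hxL; rw [hx] at this; exact this.symm)
      obtain ⟨x0, hdom⟩ := hc.2.2 ⟨i.val, hi⟩ ⟨some x, hcx⟩
      rcases x0 with _ | v0
      · rcases hdom (some x) hcx with h | h
        · exact absurd h (by simp)
        · exact absurd h hxL
      · refine ⟨v0, ?_⟩
        intro u' h
        have hu' : u' ∉ L := by
          intro hu'
          have h1 := hdin u' hu'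
          rw [h] at h1; omega
        have : c (some u') = ⟨i.val, hi⟩ := Fin.ext (by
          have := hdout u' hu'; rw [h] at this; exact this.symm)
        rcases hdom (some u') this with h' | h'
        · exact Or.inl (Option.some_injective V h')
        · exact Or.inr h'
    · have hxL : x ∈ L := by
        by_contra hxL
        have h1 := hdout x hxL
        have := (c (some x)).isLt
        rw [hx] at h1; omega
      refine ⟨x, ?_⟩
      intro u' h
      exact Or.inl (keyin u' x (by
        by_contra hu'
        have h1 := hdout u' hu'
        have := (c (some u')).isLt
        rw [h] at h1; omega) (h.trans hx.symm))

/-- Cycle extending, upper bound: adding a new vertex joined to all vertices of a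
cycle `C` of length `l` in a connected graph `G` gives `χ_dd(W⁺(G)) ≤ χ_dd(G) + 1`. -/
theorem stmt10 {V : Type*} (G : SimpleGraph V) (hG : G.Connected) (v : V)
    (w : G.Walk v v) (hw : w.IsCycle) (l : ℕ) (hl : w.length = l) :
    ddChrom (addVertex G {x : V | x ∈ w.support}) ≤ ddChrom G + 1 := by
  classical
  set SG : Set ℕ := {n : ℕ | ∃ c : V → Fin n, IsDomColoring G c} with hSG
  by_cases hne : SG.Nonempty
  · have hmem : ddChrom G ∈ SG := Nat.sInf_mem hne
    obtain ⟨c, hc⟩ := hmem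
    obtain ⟨c', hc'⟩ := extend_dom G {x : V | x ∈ w.support} c hc
    exact Nat.sInf_le ⟨c', hc'⟩
  · have hempty : {n : ℕ | ∃ c : Option V → Fin n,
        IsDomColoring (addVertex G {x : V | x ∈ w.support}) c} = ∅ := by
      ext n
      simp only [Set.mem_setOf_eq, Set.mem_empty_iff_false, iff_false]
      rintro ⟨c, hc⟩
      obtain ⟨d, hd⟩ := restrict_dom G w.support c hc
      exact hne ⟨n + w.support.length, d, hd⟩
    unfold ddChrom
    rw [hempty, Nat.sInf_empty]
    omega
end

section
/- Let G be a finite simple connected graph with at least two vertices and v a non-cut vertex of G. Then χ_dd(G) ≤ χ_dd(G - v) + 1. -/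
/-- For a connected graph `G` with at least two vertices and a non-cut vertex `v`,
`χ_dd(G) ≤ χ_dd(G - v) + 1`. -/
theorem stmt12 {V : Type*} [Fintype V] (G : SimpleGraph V) (hG : G.Connected)
    (hcard : 2 ≤ Fintype.card V) (v : V)
    (hv : (G.induce {u : V | u ≠ v}).Connected) :
    ddChrom G ≤ ddChrom (G.induce {u : V | u ≠ v}) + 1 := by
  classical
  set H := G.induce {u : V | u ≠ v} with hH
  set m := ddChrom H with hm
  have hmem : m ∈ {n : ℕ | ∃ c : ({u : V | u ≠ v} : Set V) → Fin n, IsDomColoring H c} := by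
    apply Nat.sInf_mem
    exact ⟨Fintype.card ({u : V | u ≠ v} : Set V), exists_domColoring H⟩
  obtain ⟨c, h1, h2, h3⟩ := hmem
  -- extend to a coloring of G with m+1 colors
  set c' : V → Fin (m + 1) := fun u =>
    if h : u = v then Fin.last m else (c ⟨u, h⟩).castSucc with hc'
  have hcv : c' v = Fin.last m := by simp [hc']
  have hcu : ∀ (u : V) (h : u ≠ v), c' u = (c ⟨u, h⟩).castSucc := by
    intro u h; simp [hc', h]
  have hne : ∀ (u : V) (h : u ≠ v), c' u ≠ Fin.last m := by
    intro u h
    rw [hcu u h]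
    exact (Fin.castSucc_lt_last _).ne
  apply Nat.sInf_le
  refine ⟨c', ?_, ?_, ?_⟩
  · -- proper
    intro u w hadj heq
    by_cases hu : u = v
    · by_cases hw : w = v
      · exact hadj.ne (hu.trans hw.symm)
      · exact hne w hw (heq.symm.trans (hu ▸ hcv))
    · by_cases hw : w = v
      · exact hne u hu (heq.trans (hw ▸ hcv))
      · rw [hcu u hu, hcu w hw] at heq
        exact h1 ⟨u, hu⟩ ⟨w, hw⟩ hadj (Fin.castSucc_injective _ heq)
  · -- every vertex dominates a class
    intro w
    by_cases hw : w = v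
    · refine ⟨Fin.last m, ⟨v, hcv⟩, fun u hu => ?_⟩
      by_cases hu' : u = v
      · exact Or.inl (hu'.trans hw.symm)
      · exact absurd hu (hne u hu')
    · obtain ⟨i, ⟨⟨u, hu'⟩, hu⟩, hdom⟩ := h2 ⟨w, hw⟩
      refine ⟨i.castSucc, ⟨u, by rw [hcu u hu']; exact congrArg Fin.castSucc hu⟩,
        fun x hx => ?_⟩
      by_cases hxv : x = v
      · exact absurd ((hxv ▸ hcv).symm.trans hx).symm (Fin.castSucc_lt_last i).ne
      · rw [hcu x hxv] at hx
        rcases hdom ⟨x, hxv⟩ (Fin.castSucc_injective _ hx) with h | h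
        · exact Or.inl (congrArg Subtype.val h)
        · exact Or.inr h
  · -- every nonempty class is dominated
    intro i ⟨u, hu⟩
    by_cases hi : i = Fin.last m
    · subst hi
      refine ⟨v, fun x hx => ?_⟩
      by_cases hxv : x = v
      · exact Or.inl hxv
      · exact absurd hx (hne x hxv)
    · obtain ⟨j, rfl⟩ := Fin.exists_castSucc_eq.2 hi
      have huv : u ≠ v := by
        intro h
        exact (Fin.castSucc_lt_last j).ne ((h ▸ hcv).symm.trans hu).symm
      have hcj : c ⟨u, huv⟩ = j := by
        rw [hcu u huv] at hu
        exact Fin.castSucc_injective _ hu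
      obtain ⟨w, hw⟩ := h3 j ⟨⟨u, huv⟩, hcj⟩
      refine ⟨w.val, fun x hx => ?_⟩
      have hxv : x ≠ v := by
        intro h
        exact (Fin.castSucc_lt_last j).ne ((h ▸ hcv).symm.trans hx).symm
      rw [hcu x hxv] at hx
      rcases hw ⟨x, hxv⟩ (Fin.castSucc_injective _ hx) with h | h
      · exact Or.inl (congrArg Subtype.val h)
      · exact Or.inr h
end

section
/- Let G be a finite simple connected graph and e = uv an edge of G. Then χ_dd(G) ≤ χ_dd(G - e) + 1. -/
section aux

variable {V : Type*}

private lemma sym2_ne_left {u v x y : V} (h1 : x ≠ u) (h2 : y ≠ u) :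
    s(x, y) ≠ s(u, v) := by
  intro h
  rcases Sym2.eq_iff.mp h with ⟨rfl, rfl⟩ | ⟨rfl, rfl⟩ <;> simp_all

private lemma sym2_ne_right {u v x y : V} (h1 : y ≠ u) (h2 : y ≠ v) :
    s(x, y) ≠ s(u, v) := by
  intro h
  rcases Sym2.eq_iff.mp h with ⟨rfl, rfl⟩ | ⟨rfl, rfl⟩ <;> simp_all

private lemma sym2_ne_endu {u v w : V} (h1 : u ≠ v) (h2 : w ≠ v) :
    s(w, u) ≠ s(u, v) := by
  intro h
  rcases Sym2.eq_iff.mp h with ⟨_, h'⟩ | ⟨h', _⟩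
  · exact h1 h'
  · exact h2 h'

private lemma sym2_ne_endv {u v w : V} (h1 : u ≠ v) (h2 : w ≠ u) :
    s(w, v) ≠ s(u, v) := by
  intro h
  rcases Sym2.eq_iff.mp h with ⟨h', _⟩ | ⟨_, h'⟩
  · exact h2 h'
  · exact h1 h'.symm

private lemma deleteEdges_adj' {G : SimpleGraph V} {u v a b : V}
    (h : G.Adj a b) (hne : s(a, b) ≠ s(u, v)) :
    (G.deleteEdges {s(u, v)}).Adj a b := by
  rw [SimpleGraph.deleteEdges_adj]
  exact ⟨h, by simpa using hne⟩

/-- From a dom coloring of `G - uv` with `m` colors, get one of `G` with `m+1`. -/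
private lemma lemA (G : SimpleGraph V) (u v : V) {m : ℕ}
    (c : V → Fin m) (hc : IsDomColoring (G.deleteEdges {s(u, v)}) c) :
    ∃ c' : V → Fin (m + 1), IsDomColoring G c' := by
  classical
  obtain ⟨hprop, hdomv, hdomc⟩ := hc
  have hGle : ∀ a b : V, (G.deleteEdges {s(u, v)}).Adj a b → G.Adj a b := fun a b h => h.1
  set c' : V → Fin (m + 1) :=
    fun x => if x = u then Fin.last m else (c x).castSucc with hc'def
  have hcu : c' u = Fin.last m := by simp [hc'def]
  have hco : ∀ x, x ≠ u → c' x = (c x).castSucc := fun x h => by simp [hc'def, h]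
  have hu_of : ∀ x, c' x = Fin.last m → x = u := by
    intro x hx
    by_contra h
    rw [hco x h] at hx
    exact (Fin.castSucc_lt_last (c x)).ne hx
  refine ⟨c', ?_, ?_, ?_⟩
  · -- proper
    intro x y hxy heq
    by_cases hx : x = u
    · subst hx
      rw [hcu] at heq
      exact hxy.ne' (hu_of y heq.symm)
    · by_cases hy : y = u
      · subst hy
        rw [hcu] at heq
        exact hxy.ne (hu_of x heq)
      · rw [hco x hx, hco y hy] at heq
        exact hprop x y (deleteEdges_adj' hxy (sym2_ne_left hx hy))
          (Fin.castSucc_injective m heq)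
  · -- every vertex dominates a class
    intro z
    by_cases hz : z = u
    · subst hz
      refine ⟨Fin.last m, ⟨z, hcu⟩, ?_⟩
      intro x hx
      exact Or.inl (hu_of x hx)
    · obtain ⟨i, ⟨x0, hx0⟩, hdom⟩ := hdomv z
      by_cases hex : ∃ x1, x1 ≠ u ∧ c x1 = i
      · obtain ⟨x1, hx1u, hx1⟩ := hex
        refine ⟨i.castSucc, ⟨x1, by rw [hco x1 hx1u, hx1]⟩, ?_⟩
        intro y hy
        have hyu : y ≠ u := by
          intro h
          rw [h, hcu] at hy
          exact (Fin.castSucc_lt_last i).ne hy.symm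
        rw [hco y hyu] at hy
        rcases hdom y (Fin.castSucc_injective m hy) with h | h
        · exact Or.inl h
        · exact Or.inr (hGle _ _ h)
      · have hx0u : x0 = u := by
          by_contra h
          exact hex ⟨x0, h, hx0⟩
        have hzu : G.Adj z u := by
          rcases hdom x0 hx0 with h | h
          · exact absurd (h.symm.trans hx0u) hz
          · exact hGle _ _ (hx0u ▸ h)
        refine ⟨Fin.last m, ⟨u, hcu⟩, ?_⟩
        intro y hy
        rw [hu_of y hy]
        exact Or.inr hzu
  · -- every nonempty class is dominated
    rintro i ⟨y0, hy0⟩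
    by_cases hi : i = Fin.last m
    · exact ⟨u, fun y hy => Or.inl (hu_of y (hy.trans hi))⟩
    · obtain ⟨j, rfl⟩ := Fin.exists_castSucc_eq.mpr hi
      have hy0u : y0 ≠ u := by
        intro h
        rw [h, hcu] at hy0
        exact (Fin.castSucc_lt_last j).ne hy0.symm
      rw [hco y0 hy0u] at hy0
      obtain ⟨w, hw⟩ := hdomc j ⟨y0, Fin.castSucc_injective m hy0⟩
      refine ⟨w, ?_⟩
      intro y hy
      have hyu : y ≠ u := by
        intro h
        rw [h, hcu] at hy
        exact (Fin.castSucc_lt_last j).ne hy.symm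
      rw [hco y hyu] at hy
      rcases hw y (Fin.castSucc_injective m hy) with h | h
      · exact Or.inl h
      · exact Or.inr (hGle _ _ h)

/-- From a dom coloring of `G` with `n` colors, get one of `G - uv` with `n+2`. -/
private lemma lemB (G : SimpleGraph V) (u v : V) (huv : u ≠ v) {n : ℕ}
    (c : V → Fin n) (hc : IsDomColoring G c) :
    ∃ c' : V → Fin (n + 2), IsDomColoring (G.deleteEdges {s(u, v)}) c' := by
  classical
  obtain ⟨hprop, hdomv, hdomc⟩ := hc
  have hlt : ∀ x : V, (c x).val < n := fun x => (c x).isLt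
  set c' : V → Fin (n + 2) := fun x =>
    if x = u then ⟨n, by omega⟩ else if x = v then ⟨n + 1, by omega⟩
    else ⟨(c x).val, by omega⟩ with hc'def
  have hval_u : (c' u).val = n := by simp [hc'def]
  have hval_v : (c' v).val = n + 1 := by simp [hc'def, Ne.symm huv]
  have hval_o : ∀ x, x ≠ u → x ≠ v → (c' x).val = (c x).val := by
    intro x h1 h2; simp [hc'def, h1, h2]
  have hu_of : ∀ x, (c' x).val = n → x = u := by
    intro x hx
    by_contra h1
    by_cases h2 : x = v
    · rw [h2, hval_v] at hx; omega
    · rw [hval_o x h1 h2] at hx; have := hlt x; omega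
  have hv_of : ∀ x, (c' x).val = n + 1 → x = v := by
    intro x hx
    by_contra h2
    by_cases h1 : x = u
    · rw [h1, hval_u] at hx; omega
    · rw [hval_o x h1 h2] at hx; have := hlt x; omega
  have ho_of : ∀ x, (c' x).val < n → x ≠ u ∧ x ≠ v := by
    intro x hx
    constructor
    · rintro rfl; rw [hval_u] at hx; omega
    · rintro rfl; rw [hval_v] at hx; omega
  refine ⟨c', ?_, ?_, ?_⟩
  · -- proper
    intro x y hxy heq
    have hGxy : G.Adj x y := hxy.1
    have hvv : (c' x).val = (c' y).val := congrArg Fin.val heq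
    by_cases hx1 : x = u
    · subst hx1
      rw [hval_u] at hvv
      exact hGxy.ne' (hu_of y hvv.symm)
    · by_cases hx2 : x = v
      · subst hx2
        rw [hval_v] at hvv
        exact hGxy.ne' (hv_of y hvv.symm)
      · rw [hval_o x hx1 hx2] at hvv
        have hylt : (c' y).val < n := by rw [← hvv]; exact hlt x
        obtain ⟨hy1, hy2⟩ := ho_of y hylt
        rw [hval_o y hy1 hy2] at hvv
        exact hprop x y hGxy (Fin.ext hvv)
  · -- every vertex dominates a class
    intro z
    by_cases hz1 : z = u
    · subst hz1
      refine ⟨c' z, ⟨z, rfl⟩, ?_⟩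
      intro x hx
      have := congrArg Fin.val hx
      rw [hval_u] at this
      exact Or.inl (hu_of x this)
    · by_cases hz2 : z = v
      · subst hz2
        refine ⟨c' z, ⟨z, rfl⟩, ?_⟩
        intro x hx
        have := congrArg Fin.val hx
        rw [hval_v] at this
        exact Or.inl (hv_of x this)
      · obtain ⟨i, ⟨x0, hx0⟩, hdom⟩ := hdomv z
        by_cases hex : ∃ x1, x1 ≠ u ∧ x1 ≠ v ∧ c x1 = i
        · obtain ⟨x1, h1, h2, h3⟩ := hex
          refine ⟨c' x1, ⟨x1, rfl⟩, ?_⟩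
          intro y hy
          have hyval : (c' y).val = (c x1).val := by
            rw [congrArg Fin.val hy, hval_o x1 h1 h2]
          have hylt : (c' y).val < n := by rw [hyval]; exact hlt x1
          obtain ⟨hy1, hy2⟩ := ho_of y hylt
          have hcy : c y = i := by
            rw [hval_o y hy1 hy2] at hyval
            rw [← h3]; exact Fin.ext hyval
          rcases hdom y hcy with h | h
          · exact Or.inl h
          · exact Or.inr (deleteEdges_adj' h (sym2_ne_right hy1 hy2))
        · have hx0uv : x0 = u ∨ x0 = v := by
            by_contra h
            push_neg at h
            exact hex ⟨x0, h.1, h.2, hx0⟩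
          have hadjz : G.Adj z x0 := by
            rcases hdom x0 hx0 with h | h
            · exfalso
              rcases hx0uv with h' | h'
              · exact hz1 (h.symm.trans h')
              · exact hz2 (h.symm.trans h')
            · exact h
          rcases hx0uv with rfl | rfl
          · -- x0 plays the role of u
            refine ⟨c' x0, ⟨x0, rfl⟩, ?_⟩
            intro y hy
            have := congrArg Fin.val hy
            rw [hval_u] at this
            rw [hu_of y this]
            exact Or.inr (deleteEdges_adj' hadjz (sym2_ne_endu huv hz2))
          · -- x0 plays the role of v
            refine ⟨c' x0, ⟨x0, rfl⟩, ?_⟩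
            intro y hy
            have := congrArg Fin.val hy
            rw [hval_v] at this
            rw [hv_of y this]
            exact Or.inr (deleteEdges_adj' hadjz (sym2_ne_endv huv hz1))
  · -- every nonempty class is dominated
    rintro i ⟨y0, hy0⟩
    have hival : (c' y0).val = i.val := congrArg Fin.val hy0
    by_cases h1 : i.val = n
    · refine ⟨u, ?_⟩
      intro y hy
      have := congrArg Fin.val hy
      rw [h1] at this
      exact Or.inl (hu_of y this)
    · by_cases h2 : i.val = n + 1
      · refine ⟨v, ?_⟩
        intro y hy
        have := congrArg Fin.val hy
        rw [h2] at this
        exact Or.inl (hv_of y this)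
      · have h3 : i.val < n := by have := i.isLt; omega
        have hy0lt : (c' y0).val < n := by rw [hival]; exact h3
        obtain ⟨hy01, hy02⟩ := ho_of y0 hy0lt
        have hcy0 : (c y0).val = i.val := by rw [← hval_o y0 hy01 hy02, hival]
        obtain ⟨w, hw⟩ := hdomc (c y0) ⟨y0, rfl⟩
        refine ⟨w, ?_⟩
        intro y hy
        have hyval : (c' y).val = i.val := congrArg Fin.val hy
        have hylt : (c' y).val < n := by rw [hyval]; exact h3
        obtain ⟨hy1, hy2⟩ := ho_of y hylt
        have hcy : c y = c y0 := by
          apply Fin.ext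
          rw [hval_o y hy1 hy2] at hyval
          rw [hyval, hcy0]
        rcases hw y hcy with h | h
        · exact Or.inl h
        · exact Or.inr (deleteEdges_adj' h (sym2_ne_right hy1 hy2))

end aux

/-- Edge removal: for a connected graph `G` and a non-bridge edge `e = uv`,
`χ_dd(G) ≤ χ_dd(G - e) + 1`. -/
theorem stmt14 {V : Type*} (G : SimpleGraph V) (hG : G.Connected) (u v : V)
    (he : G.Adj u v) (hb : ¬ G.IsBridge s(u, v)) :
    ddChrom G ≤ ddChrom (G.deleteEdges {s(u, v)}) + 1 := by
  by_cases hS : {n : ℕ | ∃ c : V → Fin n, IsDomColoring (G.deleteEdges {s(u, v)}) c}.Nonempty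
  · obtain ⟨c, hc⟩ := Nat.sInf_mem hS
    obtain ⟨c', hc'⟩ := lemA G u v c hc
    exact Nat.sInf_le ⟨c', hc'⟩
  · have hSG : {n : ℕ | ∃ c : V → Fin n, IsDomColoring G c} = ∅ := by
      rw [Set.eq_empty_iff_forall_notMem]
      rintro n ⟨c, hc⟩
      obtain ⟨c', hc'⟩ := lemB G u v he.ne c hc
      exact hS ⟨n + 2, c', hc'⟩
    unfold ddChrom
    rw [hSG, Nat.sInf_empty]
    omega
end
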